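/- arXiv:2107.14718 — 10 statements merged into one kernel-verified Lean document; each statement's English description precedes it below -/
import Mathlib

section
/- Every countable ordinal α admits an order-embedding f : α → ℚ such that for every limit ordinal λ < α, f(λ) = sup{f(β) : β < λ}. -/
/-!
Give the `n`-th element of a countable linear order `α` the weight `2⁻ⁿ` and send `a` to the
total weight of `Iio a` in `ℝ`. This is strictly monotone, and continuous at limits because a finite
part of `Iio l` lies below some `c < l` when `l` is a limit. The countably many values, together with
`ℚ`, form a countable dense linear order without endpoints, which Cantor's back-and-forth argument
identifies with `ℚ`; order isomorphisms preserve suprema.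
-/

open Set Order

namespace Order

theorem IsSuccLimit.of_subtypeVal {α : Type*} [Preorder α] {s : Set α} (hs : IsLowerSet s) {a : s}
    (ha : IsSuccLimit a.1) : IsSuccLimit a :=
  ⟨fun hmin ↦ ha.not_isMin fun b hb ↦ hmin (b := ⟨b, hs hb a.2⟩) hb,
    fun b hb ↦ ha.isSuccPrelimit b.1 ⟨hb.lt, fun c hbc hca ↦ hb.2 (c := ⟨c, hs hca.le a.2⟩) hbc hca⟩⟩

theorem IsSuccLimit.exists_lt_forall_lt_of_finset {α : Type*} [LinearOrder α] {l : α}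
    (hl : IsSuccLimit l) (s : Finset α) : ∃ c < l, ∀ b ∈ s, b < l → b < c := by
  induction s using Finset.induction_on with
  | empty => simpa using not_isMin_iff.1 hl.not_isMin
  | insert a s _ ih =>
    obtain ⟨c, hcl, hc⟩ := ih
    by_cases hal : a < l
    · obtain ⟨d, hdl, hd⟩ := hl.isSuccPrelimit.lt_iff_exists_lt.1 (max_lt hal hcl)
      refine ⟨d, hdl, ?_⟩
      simp only [Finset.mem_insert, forall_eq_or_imp]
      exact ⟨fun _ ↦ (le_max_left a c).trans_lt hd,
        fun b hb hbl ↦ (hc b hb hbl).trans ((le_max_right a c).trans_lt hd)⟩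
    · exact ⟨c, hcl, by simpa [hal] using hc⟩

theorem IsNormal.of_orderEmbedding_comp {α β γ : Type*} [LinearOrder α] [LinearOrder β]
    [LinearOrder γ] {e : β ↪o γ} {g : α → β} (h : IsNormal (e ∘ g)) : IsNormal g :=
  isNormal_iff.2 ⟨fun _ _ hab ↦ e.lt_iff_lt.1 (h.strictMono hab), fun _ ho _ hb ↦
    e.le_iff_le.1 ((h.le_iff_forall_le ho).2 fun a ha ↦ e.le_iff_le.2 (hb a ha))⟩

end Order

theorem Set.Countable.exists_orderIso_rat_of_subset {S : Set ℝ} (hS : S.Countable) :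
    ∃ T : Set ℝ, S ⊆ T ∧ Nonempty (T ≃o ℚ) := by
  let T : Set ℝ := S ∪ range ((↑) : ℚ → ℝ)
  have rat_mem (q : ℚ) : (q : ℝ) ∈ T := Or.inr ⟨q, rfl⟩
  have : Countable T := (hS.union (countable_range _)).to_subtype
  have : Nonempty T := ⟨⟨0, by simpa using rat_mem 0⟩⟩
  have : DenselyOrdered T := ⟨fun x y hxy ↦
    let ⟨q, hq⟩ := exists_rat_btwn (K := ℝ) hxy; ⟨⟨q, rat_mem q⟩, hq⟩⟩
  have : NoMinOrder T := ⟨fun x ↦ let ⟨q, hq⟩ := exists_rat_lt x.1; ⟨⟨q, rat_mem q⟩, hq⟩⟩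
  have : NoMaxOrder T := ⟨fun x ↦ let ⟨q, hq⟩ := exists_rat_gt x.1; ⟨⟨q, rat_mem q⟩, hq⟩⟩
  exact ⟨T, subset_union_left, Order.iso_of_countable_dense T ℚ⟩

section CountableLinearOrder

variable (α : Type*) [LinearOrder α] [Countable α]

theorem exists_isNormal_real : ∃ f : α → ℝ, IsNormal f := by
  obtain ⟨e, he⟩ := Countable.exists_injective_nat α
  set w : α → ℝ := fun a ↦ (1 / 2) ^ e a
  have hw_pos (a : α) : 0 < w a := by positivity
  have hw : Summable w := summable_geometric_two.comp_injective he
  have hw_ind (a : α) : Summable ((Iio a).indicator w) := hw.indicator _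
  have hw_ind_nonneg (a b : α) : 0 ≤ (Iio a).indicator w b :=
    indicator_nonneg (fun b _ ↦ (hw_pos b).le) b
  refine ⟨fun a ↦ ∑' b, (Iio a).indicator w b, isNormal_iff.2 ⟨fun a a' haa' ↦ ?_, ?_⟩⟩
  · refine (hw_ind a).tsum_lt_tsum (i := a) ?_ ?_ (hw_ind a')
    · exact indicator_le_indicator_of_subset (Iio_subset_Iio haa'.le) fun b ↦ (hw_pos b).le
    · simpa [indicator_of_notMem, haa'] using hw_pos a
  · intro l hl c hc
    by_contra! hlt
    obtain ⟨s, hs⟩ := ((hw_ind l).hasSum.eventually (lt_mem_nhds hlt)).exists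
    obtain ⟨d, hdl, hd⟩ := hl.exists_lt_forall_lt_of_finset s
    have hsum : ∑ b ∈ s, (Iio l).indicator w b = ∑ b ∈ s, (Iio d).indicator w b :=
      Finset.sum_congr rfl fun b hb ↦ by
        simp only [indicator_apply, mem_Iio]
        exact if_congr ⟨hd b hb, (·.trans hdl)⟩ rfl rfl
    exact lt_irrefl c <| calc
      c < ∑ b ∈ s, (Iio l).indicator w b := hs
      _ = ∑ b ∈ s, (Iio d).indicator w b := hsum
      _ ≤ ∑' b, (Iio d).indicator w b := (hw_ind d).sum_le_tsum s fun b _ ↦ hw_ind_nonneg d b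
      _ ≤ c := hc d hdl

theorem exists_isNormal_rat : ∃ f : α → ℚ, IsNormal f := by
  obtain ⟨f, hf⟩ := exists_isNormal_real α
  obtain ⟨T, hfT, ⟨φ⟩⟩ := (countable_range f).exists_orderIso_rat_of_subset
  let g : α → T := fun a ↦ ⟨f a, hfT (mem_range_self a)⟩
  have hg : IsNormal g := IsNormal.of_orderEmbedding_comp (e := OrderEmbedding.subtype (· ∈ T)) hf
  exact ⟨φ ∘ g, φ.isNormal.comp hg⟩

end CountableLinearOrder

/-- Every countable ordinal embeds into ℚ in a limit-preserving way. -/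
theorem countable_ordinal_embeds_into_rat_preserving_limits (o : Ordinal)
    (ho : o.card ≤ Cardinal.aleph0) :
    ∃ f : {β : Ordinal // β < o} → ℚ, StrictMono f ∧
      ∀ l : {β : Ordinal // β < o}, Order.IsSuccLimit l.1 →
        IsLUB (f '' {β : {β : Ordinal // β < o} | β < l}) (f l) := by
  have : Countable {β : Ordinal // β < o} := Cardinal.mk_le_aleph0_iff.1 <|
    (Cardinal.mk_Iio_ordinal o).trans_le (Cardinal.lift_le_aleph0.2 ho)
  obtain ⟨f, hf⟩ := exists_isNormal_rat {β : Ordinal // β < o}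
  exact ⟨f, hf.strictMono, fun l hl ↦
    hf.isLUB_image_Iio_of_isSuccLimit (hl.of_subtypeVal (s := Iio o) (isLowerSet_Iio o))⟩
end

section
/- A well-stratified tree T is ℚ-gradable if and only if T is special, i.e., T is the union of countably many antichains. -/
/-- A partial order is rooted if it has a minimum element. -/
def IsRooted (X : Type*) [PartialOrder X] : Prop := ∃ r : X, ∀ x, r ≤ x

/-- The set of predecessors of every element is linearly ordered. -/
def DownLinear (X : Type*) [PartialOrder X] : Prop :=
  ∀ x y z : X, y ≤ x → z ≤ x → y ≤ z ∨ z ≤ y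

/-- A well-stratified tree: a rooted partial order in which the set of
predecessors of every element is well-ordered. -/
def IsWSTree (T : Type*) [PartialOrder T] : Prop :=
  IsRooted T ∧ DownLinear T ∧ ∀ x : T, (Set.Iio x).IsWF

open Finset in
private lemma ico_twopow_sum (b : ℕ) :
    ∀ m, ∑ n ∈ Finset.Ico (b+1) (b+1+m), ((2:ℚ)^n)⁻¹ = ((2:ℚ)^b)⁻¹ - ((2:ℚ)^(b+m))⁻¹ := by
  intro m
  induction m with
  | zero => simp
  | succ m ih =>
    rw [show b+1+(m+1) = (b+1+m)+1 from rfl,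
      Finset.sum_Ico_succ_top (by omega), ih]
    have h1 : ((2:ℚ)^(b+m)) ≠ 0 := by positivity
    have h2 : ((2:ℚ)^(b+1+m)) ≠ 0 := by positivity
    have h3 : ((2:ℚ)^(b+m+1)) ≠ 0 := by positivity
    field_simp
    ring_nf

private lemma twopow_sum_lt (b : ℕ) (s : Finset ℕ) (hs : ∀ n ∈ s, b < n) :
    ∑ n ∈ s, ((2:ℚ)^n)⁻¹ < ((2:ℚ)^b)⁻¹ := by
  set m := s.sup id + 1 with hm
  have hsub : s ⊆ Finset.Ico (b+1) (b+1+m) := by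
    intro n hn
    simp only [Finset.mem_Ico]
    have := Finset.le_sup (f := id) hn
    constructor
    · exact hs n hn
    · simp only [id] at this; omega
  calc ∑ n ∈ s, ((2:ℚ)^n)⁻¹ ≤ ∑ n ∈ Finset.Ico (b+1) (b+1+m), ((2:ℚ)^n)⁻¹ :=
        Finset.sum_le_sum_of_subset_of_nonneg hsub (by intros; positivity)
    _ = ((2:ℚ)^b)⁻¹ - ((2:ℚ)^(b+m))⁻¹ := ico_twopow_sum b m
    _ < ((2:ℚ)^b)⁻¹ := by
        have : (0:ℚ) < ((2:ℚ)^(b+m))⁻¹ := by positivity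
        linarith


/-- A well-stratified tree is ℚ-gradable iff it is special, i.e. a union of
countably many antichains. -/
theorem wstree_rat_gradable_iff_special (T : Type*) [PartialOrder T]
    (hT : IsWSTree T) :
    (∃ f : T → ℚ, StrictMono f) ↔
      ∃ A : ℕ → Set T, (∀ n, IsAntichain (· ≤ ·) (A n)) ∧ (⋃ n, A n) = Set.univ := by
  classical
  constructor
  · rintro ⟨f, hf⟩
    obtain ⟨e, he⟩ := exists_surjective_nat ℚ
    refine ⟨fun n => f ⁻¹' {e n}, fun n => ?_, ?_⟩
    · intro x hx y hy hxy hle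
      have hlt : x < y := lt_of_le_of_ne hle hxy
      have := hf hlt
      simp only [Set.mem_preimage, Set.mem_singleton_iff] at hx hy
      rw [hx, hy] at this
      exact lt_irrefl _ this
    · ext x
      simp only [Set.mem_iUnion, Set.mem_preimage, Set.mem_singleton_iff,
        Set.mem_univ, iff_true]
      obtain ⟨n, hn⟩ := he (f x)
      exact ⟨n, hn.symm⟩
  · rintro ⟨A, hA, hcov⟩
    have hmem : ∀ x : T, ∃ n, x ∈ A n := by
      intro x
      have : x ∈ ⋃ n, A n := hcov ▸ Set.mem_univ x
      exact Set.mem_iUnion.mp this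
    -- least index of the antichain containing x
    set idx : T → ℕ := fun x => Nat.find (hmem x) with hidx
    have hidx_mem : ∀ x, x ∈ A (idx x) := fun x => Nat.find_spec (hmem x)
    -- S x n : some element ≤ x lies in A n
    set S : T → ℕ → Prop := fun x n => ∃ z, z ≤ x ∧ z ∈ A n with hS
    have hSmono : ∀ {x y : T}, x ≤ y → ∀ {n}, S x n → S y n := by
      rintro x y hxy n ⟨z, hz, hzA⟩; exact ⟨z, hz.trans hxy, hzA⟩
    have hSself : ∀ x, S x (idx x) := fun x => ⟨x, le_refl x, hidx_mem x⟩
    -- key: if x < y and y ∈ A n, then ¬ S x n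
    have hkey : ∀ {x y : T}, x < y → ∀ {n}, y ∈ A n → ¬ S x n := by
      rintro x y hxy n hyA ⟨z, hz, hzA⟩
      have hzy : z < y := lt_of_le_of_lt hz hxy
      exact hA n hzA hyA hzy.ne hzy.le
    set F : T → Finset ℕ :=
      fun x => (Finset.range (idx x + 1)).filter (fun n => S x n) with hF
    have hFmem : ∀ x n, n ∈ F x ↔ n ≤ idx x ∧ S x n := by
      intro x n
      simp [hF, Finset.mem_filter, Finset.mem_range, Nat.lt_succ_iff]
    refine ⟨fun x => ∑ n ∈ F x, ((2:ℚ)^n)⁻¹, ?_⟩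
    intro x y hxy
    have hbne : ¬ S x (idx y) := hkey hxy (hidx_mem y)
    have hane : idx x ≠ idx y := fun h => hbne (h ▸ hSself x)
    rcases lt_or_gt_of_ne hane with hab | hab
    · -- idx x < idx y : F x ⊂ F y
      have hsub : F x ⊆ F y := by
        intro n hn
        rw [hFmem] at hn ⊢
        exact ⟨hn.1.trans hab.le, hSmono hxy.le hn.2⟩
      have hbin : idx y ∈ F y := (hFmem y _).mpr ⟨le_refl _, hSself y⟩
      have hbnotin : idx y ∉ F x := fun h => hbne ((hFmem x _).mp h).2
      exact Finset.sum_lt_sum_of_subset hsub hbin hbnotin (by positivity)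
        (by intros; positivity)
    · -- idx y < idx x
      set b := idx y with hb
      set G := (F x).filter (fun n => n < b) with hG
      have hGsub : insert b G ⊆ F y := by
        intro n hn
        rcases Finset.mem_insert.mp hn with rfl | hn
        · exact (hFmem y _).mpr ⟨le_refl _, hSself y⟩
        · rw [hG, Finset.mem_filter] at hn
          rw [hFmem] at hn ⊢
          exact ⟨hn.2.le.trans (le_refl b), hSmono hxy.le hn.1.2⟩
      have hbG : b ∉ G := by simp [hG]
      have hsplit : F x = G ∪ (F x).filter (fun n => ¬ n < b) :=
        (Finset.filter_union_filter_not_eq _ _).symm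
      have hdisj : Disjoint G ((F x).filter (fun n => ¬ n < b)) :=
        Finset.disjoint_filter_filter_not _ _ _
      have hrest : ∀ n ∈ (F x).filter (fun n => ¬ n < b), b < n := by
        intro n hn
        rw [Finset.mem_filter] at hn
        have hnb : n ≠ b := fun h => hbne (h ▸ ((hFmem x n).mp hn.1).2)
        omega
      calc ∑ n ∈ F x, ((2:ℚ)^n)⁻¹
          = ∑ n ∈ G, ((2:ℚ)^n)⁻¹ + ∑ n ∈ (F x).filter (fun n => ¬ n < b), ((2:ℚ)^n)⁻¹ := by
            conv_lhs => rw [hsplit]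
            exact Finset.sum_union hdisj
        _ < ∑ n ∈ G, ((2:ℚ)^n)⁻¹ + ((2:ℚ)^b)⁻¹ := by
            have := twopow_sum_lt b _ hrest
            linarith
        _ = ∑ n ∈ insert b G, ((2:ℚ)^n)⁻¹ := by
            rw [Finset.sum_insert hbG]; ring
        _ ≤ ∑ n ∈ F y, ((2:ℚ)^n)⁻¹ :=
            Finset.sum_le_sum_of_subset_of_nonneg hGsub (by intros; positivity)
end

section
/- Let T be a well-stratified tree and let T(succ) denote the suborder of nodes whose rank is a successor ordinal. Then T admits a strictly monotonic map into ℝ if and only if T(succ) admits a strictly monotonic map into ℚ. -/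
/-- In a well-stratified tree, an element has successor rank iff its set of
strict predecessors has a maximum, i.e. it has an immediate predecessor. -/
def SuccRank {T : Type*} [PartialOrder T] (x : T) : Prop :=
  ∃ y, y < x ∧ ∀ z, z < x → z ≤ y

open scoped NNReal

theorem Set.exists_strictMono_real {α : Type*} [Countable α] :
    ∃ F : Set α → ℝ, StrictMono F := by
  obtain ⟨w, hw_pos, _, hw_sum, -⟩ := NNReal.exists_pos_sum_of_countable one_ne_zero α
  refine ⟨fun s => ((∑' a, s.indicator w a : ℝ≥0) : ℝ),
    fun s t hst => NNReal.coe_lt_coe.2 ?_⟩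
  obtain ⟨a, hat, has⟩ := Set.exists_of_ssubset hst
  refine NNReal.tsum_lt_tsum (i := a)
    (fun b => Set.indicator_le_indicator_of_subset hst.subset (fun _ => zero_le) b) ?_
    (NNReal.summable_of_le (fun b => Set.indicator_le_self _ _ b) hw_sum.summable)
  rw [Set.indicator_of_notMem has, Set.indicator_of_mem hat]
  exact hw_pos a

theorem exists_succRank_between {T : Type*} [PartialOrder T] (hlin : DownLinear T)
    (hwf : ∀ x : T, (Set.Iio x).IsWF) {x y : T} (hxy : x < y) :
    ∃ z, SuccRank z ∧ x < z ∧ z ≤ y := by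
  set S : Set T := {z | x < z ∧ z ≤ y}
  have hS : S.IsWF := ((hwf y).insert y).subset fun z hz => hz.2.lt_or_eq.elim Or.inr Or.inl
  have hne : S.Nonempty := ⟨y, hxy, le_rfl⟩
  obtain ⟨hxz, hzy⟩ := hS.min_mem hne
  refine ⟨hS.min hne, ⟨x, hxz, fun w hw => ?_⟩, hxz, hzy⟩
  by_contra hwx
  have hxw : x < w := ((hlin y w x (hw.le.trans hzy) hxy.le).resolve_left hwx).lt_of_not_ge hwx
  exact hS.not_lt_min hne ⟨hxw, hw.le.trans hzy⟩ hw

theorem strictMono_image_succRank_le {T α : Type*} [PartialOrder T] [Preorder α]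
    (hlin : DownLinear T) (hwf : ∀ x : T, (Set.Iio x).IsWF)
    {g : {x : T // SuccRank x} → α} (hg : StrictMono g) :
    StrictMono fun x : T => g '' {z | z.1 ≤ x} := by
  intro x y hxy
  obtain ⟨z, hz, hxz, hzy⟩ := exists_succRank_between hlin hwf hxy
  refine (Set.ssubset_iff_of_subset ?_).2 ⟨g ⟨z, hz⟩, ⟨⟨z, hz⟩, hzy, rfl⟩, ?_⟩
  · exact Set.image_mono fun w (hw : w.1 ≤ x) => hw.trans hxy.le
  · rintro ⟨w, hwx : w.1 ≤ x, hw⟩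
    exact (hg (show w < ⟨z, hz⟩ from hwx.trans_lt hxz)).ne hw

theorem exists_strictMono_succRank_rat {T : Type*} [PartialOrder T] {f : T → ℝ}
    (hf : StrictMono f) : ∃ g : {x : T // SuccRank x} → ℚ, StrictMono g := by
  choose pred hpred_lt hle_pred using fun x : {x : T // SuccRank x} => x.2
  choose g hg_gt hg_lt using fun x => exists_rat_btwn (hf (hpred_lt x))
  refine ⟨g, fun x y hxy => (Rat.cast_lt (K := ℝ)).1 ?_⟩
  calc (g x : ℝ) < f x := hg_lt x
    _ ≤ f (pred y) := hf.monotone (hle_pred y x hxy)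
    _ < g y := hg_gt y

/-- A well-stratified tree admits a strictly monotonic map into ℝ iff the
suborder of nodes of successor rank admits a strictly monotonic map into ℚ. -/
theorem real_gradable_iff_succ_nodes_rat_gradable (T : Type*) [PartialOrder T]
    (hT : IsWSTree T) :
    (∃ f : T → ℝ, StrictMono f) ↔
      ∃ g : {x : T // SuccRank x} → ℚ, StrictMono g := by
  obtain ⟨-, hlin, hwf⟩ := hT
  refine ⟨fun ⟨f, hf⟩ => exists_strictMono_succRank_rat hf, fun ⟨g, hg⟩ => ?_⟩
  obtain ⟨F, hF⟩ := Set.exists_strictMono_real (α := ℚ)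
  exact ⟨_, hF.comp (strictMono_image_succRank_le hlin hwf hg)⟩
end

section
/- The tree In_ω of all injective functions f : α → ω (α a countable-or-arbitrary ordinal) ordered by inclusion is not the union of countably many antichains. -/
/-!
Suppose the antichains `A k` cover `In_ω`. Build a chain `f₀ < f₁ < ⋯` together with shrinking
sets `U₀ ⊇ U₁ ⊇ ⋯` of natural numbers such that `fₖ` takes values in `Uₖ` and leaves infinitely
many of them unused. At stage `k`, if `A k` contains a proper extension of `fₖ` with the same
property relative to `Uₖ`, let `fₖ₊₁` be one; in any case `Uₖ₊₁` is `Uₖ` minus one point `xₖ`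
unused by `fₖ₊₁`. The union `F` of the chain never uses the points `xₖ`, so it has the property
relative to every `Uₖ`. If `F ∈ A m`, then `F` was a candidate at stage `m`, so
`fₘ₊₁ ∈ A m` and `fₘ₊₁ < F`, contradicting that `A m` is an antichain.
-/

/-- The tree `In_ω` of injective functions from ordinals into `ω`, coded by
their (injective) partial inverses `g : ℕ → Option Ordinal`: the first
condition says the original function is well defined (each ordinal is hit by
at most one `n`), and the second says that the set of ordinal values is
downward closed, i.e. the domain of the original function is an ordinal. -/
def InOmega : Type 1 :=
  {g : ℕ → Option Ordinal //
    (∀ m n β, g m = some β → g n = some β → m = n) ∧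
    (∀ β γ : Ordinal, β < γ → (∃ n, g n = some γ) → ∃ m, g m = some β)}

/-- `In_ω` is ordered by extension of the coded injective functions. -/
instance : PartialOrder InOmega where
  le f g := ∀ n β, f.1 n = some β → g.1 n = some β
  le_refl f := fun _ _ h => h
  le_trans f g h hfg hgh := fun n β hb => hgh n β (hfg n β hb)
  le_antisymm f g hfg hgf := by
    apply Subtype.ext; funext n
    cases hf : f.1 n with
    | none =>
      cases hg : g.1 n with
      | none => rfl
      | some β => exact absurd (hgf n β hg) (by simp [hf])
    | some β => exact (hfg n β hf).symm

namespace InOmega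

-- For the coded function `α → ω`, `support` is its range and `length` its domain `α`.
def support (f : InOmega) : Set ℕ := {n | ∃ β, f.1 n = some β}

lemma notMem_support {f : InOmega} {n : ℕ} : n ∉ f.support ↔ f.1 n = none := by
  simp [support, Option.eq_none_iff_forall_ne_some]

lemma support_mono {f g : InOmega} (h : f ≤ g) : f.support ⊆ g.support :=
  fun n ⟨β, hβ⟩ => ⟨β, h n β hβ⟩

def nil : InOmega := ⟨fun _ => none, by simp, by simp⟩

noncomputable def length (f : InOmega) : Ordinal := ⨆ n, (f.1 n).elim 0 Order.succ

lemma exists_eq_some_iff_lt_length (f : InOmega) (β : Ordinal) :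
    (∃ n, f.1 n = some β) ↔ β < f.length := by
  constructor
  · rintro ⟨n, hn⟩
    calc β < Order.succ β := Order.lt_succ β
      _ = (f.1 n).elim 0 Order.succ := by rw [hn]; rfl
      _ ≤ f.length := Ordinal.le_iSup _ n
  · intro hβ
    obtain ⟨n, hn⟩ := Ordinal.lt_iSup_iff.1 hβ
    cases hfn : f.1 n with
    | none => simp [hfn] at hn
    | some γ =>
      rw [hfn, Option.elim_some, Order.lt_succ_iff] at hn
      rcases hn.eq_or_lt with rfl | hlt
      · exact ⟨n, hfn⟩
      · exact f.2.2 β γ hlt ⟨n, hfn⟩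

lemma apply_ne_some_length (f : InOmega) (n : ℕ) : f.1 n ≠ some f.length :=
  fun h => (f.exists_eq_some_iff_lt_length _).1 ⟨n, h⟩ |>.false

lemma update_length_eq_some_iff {f : InOmega} {n m : ℕ} (hn : n ∉ f.support) {β : Ordinal} :
    Function.update f.1 n (some f.length) m = some β ↔ f.1 m = some β ∨ m = n ∧ f.length = β := by
  rw [notMem_support] at hn
  by_cases hm : m = n
  · subst hm; simp [hn]
  · simp [hm]

/-- Extends the coded function by sending the ordinal `f.length` to `n`. -/
noncomputable def snoc (f : InOmega) (n : ℕ) (hn : n ∉ f.support) : InOmega :=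
  ⟨Function.update f.1 n (some f.length), by
    intro m₁ m₂ β h₁ h₂
    rw [update_length_eq_some_iff hn] at h₁ h₂
    rcases h₁ with h₁ | ⟨rfl, rfl⟩ <;> rcases h₂ with h₂ | ⟨rfl, h₂⟩
    · exact f.2.1 _ _ _ h₁ h₂
    · exact absurd (h₂ ▸ h₁) (f.apply_ne_some_length _)
    · exact absurd h₂ (f.apply_ne_some_length _)
    · rfl, by
    intro β γ hβγ ⟨m, hm⟩
    have hγ : γ ≤ f.length := by
      rcases (update_length_eq_some_iff hn).1 hm with hm | ⟨-, rfl⟩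
      · exact ((f.exists_eq_some_iff_lt_length γ).1 ⟨m, hm⟩).le
      · rfl
    obtain ⟨m', hm'⟩ := (f.exists_eq_some_iff_lt_length β).2 (hβγ.trans_le hγ)
    exact ⟨m', (update_length_eq_some_iff hn).2 (.inl hm')⟩⟩

lemma support_snoc (f : InOmega) (n : ℕ) (hn : n ∉ f.support) :
    (f.snoc n hn).support = insert n f.support := by
  ext m
  by_cases hm : m = n
  · subst hm; simp [snoc, support]
  · simp [snoc, support, hm]

lemma lt_snoc (f : InOmega) (n : ℕ) (hn : n ∉ f.support) : f < f.snoc n hn := by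
  have hle : f ≤ f.snoc n hn := fun m β hm => (update_length_eq_some_iff hn).2 (.inl hm)
  refine hle.lt_of_ne fun h => hn ?_
  rw [h, support_snoc]
  exact Set.mem_insert n _

lemma eq_of_monotone_of_apply_eq_some {c : ℕ → InOmega} (hc : Monotone c) {j k n : ℕ}
    {β γ : Ordinal} (hj : (c j).1 n = some β) (hk : (c k).1 n = some γ) : β = γ := by
  rcases le_total j k with hjk | hkj
  · exact Option.some_injective _ ((hc hjk n β hj).symm.trans hk)
  · exact Option.some_injective _ (hj.symm.trans (hc hkj n γ hk))

lemma exists_iUnion_of_monotone {c : ℕ → InOmega} (hc : Monotone c) :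
    ∃ F : InOmega, ∀ n β, F.1 n = some β ↔ ∃ k, (c k).1 n = some β := by
  classical
  let G : ℕ → Option Ordinal := fun n =>
    if h : ∃ β k, (c k).1 n = some β then some h.choose else none
  have hG : ∀ n β, G n = some β ↔ ∃ k, (c k).1 n = some β := by
    intro n β
    by_cases h : ∃ β k, (c k).1 n = some β
    · obtain ⟨k, hk⟩ := h.choose_spec
      simp only [G, dif_pos h, Option.some_inj]
      exact ⟨fun hβ => ⟨k, hβ ▸ hk⟩, fun ⟨j, hj⟩ => eq_of_monotone_of_apply_eq_some hc hk hj⟩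
    · simp only [G, dif_neg h]
      exact ⟨nofun, fun hk => (h ⟨β, hk⟩).elim⟩
  refine ⟨⟨G, ?_, ?_⟩, hG⟩
  · intro m n β hm hn
    obtain ⟨j, hj⟩ := (hG m β).1 hm
    obtain ⟨k, hk⟩ := (hG n β).1 hn
    exact (c (max j k)).2.1 m n β (hc (le_max_left j k) m β hj) (hc (le_max_right j k) n β hk)
  · rintro β γ hβγ ⟨n, hn⟩
    obtain ⟨k, hk⟩ := (hG n γ).1 hn
    obtain ⟨m, hm⟩ := (c k).2.2 β γ hβγ ⟨n, hk⟩
    exact ⟨m, (hG m β).2 ⟨k, hm⟩⟩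

def LeavesRoom (U : Set ℕ) (f : InOmega) : Prop :=
  f.support ⊆ U ∧ (U \ f.support).Infinite

lemma leavesRoom_univ_nil : LeavesRoom Set.univ nil :=
  ⟨Set.subset_univ _, by simpa [support, nil] using Set.infinite_univ⟩

lemma LeavesRoom.exists_lt {U : Set ℕ} {f : InOmega} (h : LeavesRoom U f) :
    ∃ g, f < g ∧ LeavesRoom U g := by
  obtain ⟨n, hnU, hn⟩ := h.2.nonempty
  refine ⟨f.snoc n hn, f.lt_snoc n hn, ?_, ?_⟩
  · rw [support_snoc]
    exact Set.insert_subset hnU h.1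
  · rw [support_snoc, ← Set.union_singleton, ← Set.sdiff_sdiff]
    exact h.2.sdiff (Set.finite_singleton n)

lemma LeavesRoom.exists_diff_singleton {U : Set ℕ} {f : InOmega} (h : LeavesRoom U f) :
    ∃ x ∈ U, LeavesRoom (U \ {x}) f := by
  obtain ⟨x, hxU, hx⟩ := h.2.nonempty
  refine ⟨x, hxU, fun n hn => ⟨h.1 hn, fun hnx => hx (hnx ▸ hn)⟩, ?_⟩
  rw [Set.sdiff_sdiff_comm]
  exact h.2.sdiff (Set.finite_singleton x)

lemma LeavesRoom.exists_step (A : Set InOmega) {U : Set ℕ} {f : InOmega} (h : LeavesRoom U f) :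
    ∃ g, ∃ x ∈ U, f < g ∧ LeavesRoom (U \ {x}) g ∧
      ((∃ g' ∈ A, f < g' ∧ LeavesRoom U g') → g ∈ A) := by
  obtain ⟨g, hfg, hg, hA⟩ : ∃ g, f < g ∧ LeavesRoom U g ∧
      ((∃ g' ∈ A, f < g' ∧ LeavesRoom U g') → g ∈ A) := by
    by_cases hc : ∃ g' ∈ A, f < g' ∧ LeavesRoom U g'
    · obtain ⟨g, hgA, hfg, hg⟩ := hc
      exact ⟨g, hfg, hg, fun _ => hgA⟩
    · obtain ⟨g, hfg, hg⟩ := h.exists_lt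
      exact ⟨g, hfg, hg, fun h => absurd h hc⟩
  obtain ⟨x, hxU, hg⟩ := hg.exists_diff_singleton
  exact ⟨g, x, hxU, hfg, hg, hA⟩

structure DiagonalChain (A : ℕ → Set InOmega) where
  f : ℕ → InOmega
  U : ℕ → Set ℕ
  x : ℕ → ℕ
  leavesRoom : ∀ k, LeavesRoom (U k) (f k)
  lt_succ : ∀ k, f k < f (k + 1)
  x_mem : ∀ k, x k ∈ U k
  U_succ : ∀ k, U (k + 1) = U k \ {x k}
  succ_mem : ∀ k, (∃ g ∈ A k, f k < g ∧ LeavesRoom (U k) g) → f (k + 1) ∈ A k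

lemma nonempty_diagonalChain (A : ℕ → Set InOmega) : Nonempty (DiagonalChain A) := by
  let S := {p : InOmega × Set ℕ // LeavesRoom p.2 p.1}
  choose g x hx hlt hg hA using fun k (s : S) => s.2.exists_step (A k)
  let s : ℕ → S := fun k =>
    Nat.rec ⟨(nil, Set.univ), leavesRoom_univ_nil⟩ (fun k s => ⟨(g k s, s.1.2 \ {x k s}), hg k s⟩) k
  exact ⟨⟨fun k => (s k).1.1, fun k => (s k).1.2, fun k => x k (s k), fun k => (s k).2,
    fun k => hlt k (s k), fun k => hx k (s k), fun _ => rfl, fun k => hA k (s k)⟩⟩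

namespace DiagonalChain

variable {A : ℕ → Set InOmega} (c : DiagonalChain A)

lemma strictMono : StrictMono c.f := strictMono_nat_of_lt_succ c.lt_succ

lemma antitone : Antitone c.U :=
  antitone_nat_of_succ_le fun k => (c.U_succ k).trans_subset Set.sdiff_subset

lemma x_notMem_of_lt {i j : ℕ} (hij : i < j) : c.x i ∉ c.U j := fun h =>
  (c.U_succ i ▸ c.antitone hij h).2 rfl

lemma x_injective : Function.Injective c.x :=
  Function.Injective.of_lt_imp_ne fun _ j hij hx => c.x_notMem_of_lt hij (hx ▸ c.x_mem j)

lemma leavesRoom_of_iUnion {F : InOmega}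
    (hF : ∀ n β, F.1 n = some β ↔ ∃ k, (c.f k).1 n = some β) (k : ℕ) : LeavesRoom (c.U k) F := by
  have hsupp : ∀ k, F.support ⊆ c.U k := by
    rintro k n ⟨β, hβ⟩
    obtain ⟨j, hj⟩ := (hF n β).1 hβ
    have hn : n ∈ (c.f (max j k)).support :=
      support_mono (c.strictMono.monotone (le_max_left j k)) ⟨β, hj⟩
    exact c.antitone (le_max_right j k) ((c.leavesRoom _).1 hn)
  refine ⟨hsupp k, Set.infinite_of_injOn_mapsTo c.x_injective.injOn ?_ (Set.Ici_infinite k)⟩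
  intro i (hi : k ≤ i)
  exact ⟨c.antitone hi (c.x_mem i), fun h => c.x_notMem_of_lt (Nat.lt_succ_self i) (hsupp _ h)⟩

end DiagonalChain

end InOmega

/-- `In_ω` is not the union of countably many antichains. -/
theorem inOmega_not_special :
    ¬ ∃ A : ℕ → Set InOmega,
        (∀ n, IsAntichain (· ≤ ·) (A n)) ∧ (⋃ n, A n) = Set.univ := by
  rintro ⟨A, hA, hcov⟩
  obtain ⟨c⟩ := InOmega.nonempty_diagonalChain A
  obtain ⟨F, hF⟩ := InOmega.exists_iUnion_of_monotone c.strictMono.monotone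
  have hlt : ∀ k, c.f k < F := fun k =>
    (c.lt_succ k).trans_le fun n β h => (hF n β).2 ⟨k + 1, h⟩
  obtain ⟨m, hm⟩ := Set.mem_iUnion.1 (hcov ▸ Set.mem_univ F)
  have hsucc : c.f (m + 1) ∈ A m := c.succ_mem m ⟨F, hm, hlt m, c.leavesRoom_of_iUnion hF m⟩
  exact hA m hsucc hm (hlt (m + 1)).ne (hlt (m + 1)).le
end

section
/- If T is a Hausdorff well-stratified tree with no uncountable branches, then the road space Road(T) is a branchwise-real tree order: every branch of Road(T) is order-isomorphic to a real interval and Road(T) is a meet-semilattice. -/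
/-- A branchwise-real tree order: a rooted partial order with linearly
ordered predecessor sets, in which every branch (maximal chain) is
order-isomorphic to a real interval, and any two elements have a meet. -/
def IsBRTO (X : Type*) [PartialOrder X] : Prop :=
  IsRooted X ∧ DownLinear X ∧
  (∀ B : Set X, IsMaxChain (· ≤ ·) B →
      ∃ I : Set ℝ, I.OrdConnected ∧ Nonempty (B ≃o I)) ∧
  (∀ x y : X, ∃ m : X, IsGLB {x, y} m)

/-- A continuous grading: a strictly monotonic real-valued map restricting
to an order isomorphism `[x,y] → [ℓ x, ℓ y]` for all `x < y` (these intervals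
are chains, so a strictly monotonic bijection between them is an order
isomorphism). -/
def IsContinuousGrading {X : Type*} [PartialOrder X] (ℓ : X → ℝ) : Prop :=
  StrictMono ℓ ∧ ∀ x y : X, x < y →
    Set.BijOn ℓ (Set.Icc x y) (Set.Icc (ℓ x) (ℓ y))

/-- The road space of a tree `T`: the suborder of the lexicographic product
`T ×ₗ (0,1]` consisting of the pairs `⟨x,t⟩` with `t = 1` or `x` of successor
rank. -/
abbrev Road (T : Type*) [PartialOrder T] : Type _ :=
  {p : T ×ₗ (Set.Ioc (0:ℝ) 1) // ((ofLex p).2 : ℝ) = 1 ∨ SuccRank (ofLex p).1}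

/-!
A maximal chain `B` of `Road T` is the full preimage of a maximal chain `C` of `T`, which is
downward closed, well ordered and, by hypothesis, countable. Enumerate `C` as `e 0, e 1, …` and
give `e n` the weight `2⁻ⁿ`. The mass below `x` is then strictly increasing along `C` and left
continuous at limit points, so stretching each fibre `{x} × (0,1]` linearly over the gap of length
the weight of the predecessor of `x` maps `B` strictly monotonically onto an interval: a value `c`
in between is attained on the fibre over the least `w ∈ C` whose mass below reaches `c`.
Meets in `Road T` come from meets in `T`.
-/

open Set

section Tree

variable {T : Type*} [PartialOrder T]

theorem IsMaxChain.mem_of_isChain_insert {α : Type*} {r : α → α → Prop} {s : Set α} {a : α}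
    (hs : IsMaxChain r s) (ha : IsChain r (insert a s)) : a ∈ s :=
  hs.2 ha (subset_insert a s) ▸ mem_insert a s

theorem IsMaxChain.mem_of_le (hdl : DownLinear T) {C : Set T} (hC : IsMaxChain (· ≤ ·) C)
    {x y : T} (hx : x ∈ C) (hyx : y ≤ x) : y ∈ C := by
  refine hC.mem_of_isChain_insert (hC.isChain.insert fun z hz _ => ?_)
  rcases hC.isChain.total hx hz with hxz | hzx
  · exact Or.inl (hyx.trans hxz)
  · exact hdl x y z hyx hzx

theorem IsChain.exists_isLeast (hwf : ∀ x : T, (Iio x).IsWF) {S : Set T}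
    (hS : IsChain (· ≤ ·) S) (hne : S.Nonempty) : ∃ m, IsLeast S m := by
  obtain ⟨x, hx⟩ := hne
  have hwfx : (S ∩ Iic x).IsWF := ((hwf x).union isWF_singleton).mono <| by
    rw [union_singleton, Iio_insert]; exact inter_subset_right
  have hne : (S ∩ Iic x).Nonempty := ⟨x, hx, le_rfl⟩
  obtain ⟨hmS, hmx⟩ := hwfx.min_mem hne
  refine ⟨hwfx.min hne, hmS, fun z hz => ?_⟩
  refine hS.le_of_not_gt hz hmS fun hzm => hwfx.not_lt_min hne ⟨hz, ?_⟩ hzm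
  exact hzm.le.trans hmx

theorem IsChain.nonempty_orderIso_image {α β : Type*} [PartialOrder α] [Preorder β] {s : Set α}
    {f : α → β} (hs : IsChain (· ≤ ·) s) (hf : StrictMonoOn f s) : Nonempty (s ≃o f '' s) := by
  have hle : ∀ a ∈ s, ∀ b ∈ s, f a ≤ f b ↔ a ≤ b := fun a ha b hb =>
    ⟨fun h => hs.le_of_not_gt hb ha fun hba => (hf hb ha hba).not_ge h,
      fun h => h.eq_or_lt.elim (fun hab => hab ▸ le_rfl) fun hab => (hf ha hb hab).le⟩
  have hinj : InjOn f s := fun a ha b hb h =>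
    le_antisymm ((hle a ha b hb).1 h.le) ((hle b hb a ha).1 h.ge)
  exact ⟨{ toEquiv := hinj.bijOn_image.equiv _, map_rel_iff' := fun {a b} => hle a a.2 b b.2 }⟩

theorem exists_between_of_not_succRank (hdl : DownLinear T) {x y : T} (hx : ¬SuccRank x)
    (hyx : y < x) : ∃ z, y < z ∧ z < x := by
  simp only [SuccRank, not_exists, not_and, not_forall] at hx
  obtain ⟨z, hzx, hzy⟩ := hx y hyx
  refine ⟨z, ?_, hzx⟩
  rcases hdl x y z hyx.le hzx.le with hyz | hzy'
  · exact hyz.lt_of_ne fun h => hzy (h ▸ le_rfl)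
  · exact absurd hzy' hzy

theorem exists_forall_lt_of_not_succRank {ι : Type*} (hdl : DownLinear T) {x : T}
    (hx : ¬SuccRank x) {s : Finset ι} (hs : s.Nonempty) {f : ι → T} (hfx : ∀ i ∈ s, f i < x) :
    ∃ z < x, ∀ i ∈ s, f i < z := by
  obtain ⟨i, his, hmax⟩ := s.exists_maximalFor f hs
  obtain ⟨z, hiz, hzx⟩ := exists_between_of_not_succRank hdl hx (hfx i his)
  refine ⟨z, hzx, fun j hj => lt_of_le_of_lt ?_ hiz⟩
  rcases hdl x (f j) (f i) (hfx j hj).le (hfx i his).le with hji | hij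
  · exact hji
  · exact hmax hj hij

open Classical in
noncomputable def immediatePred (x : T) : T := if h : SuccRank x then h.choose else x

theorem immediatePred_lt {x : T} (h : SuccRank x) : immediatePred x < x := by
  rw [immediatePred, dif_pos h]; exact h.choose_spec.1

theorem le_immediatePred {x z : T} (h : SuccRank x) (hz : z < x) : z ≤ immediatePred x := by
  rw [immediatePred, dif_pos h]; exact h.choose_spec.2 z hz

theorem immediatePred_of_not_succRank {x : T} (h : ¬SuccRank x) : immediatePred x = x :=
  dif_neg h

theorem immediatePred_le (x : T) : immediatePred x ≤ x := by
  by_cases h : SuccRank x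
  · exact (immediatePred_lt h).le
  · exact (immediatePred_of_not_succRank h).le

end Tree

section Mass

variable {T : Type*} [PartialOrder T] (e : ℕ → T)

noncomputable def massBelow (x : T) : ℝ :=
  ∑' n, (e ⁻¹' Iio x).indicator (fun n => (1 / 2 : ℝ) ^ n) n

theorem summable_indicator_geometric (s : Set ℕ) :
    Summable (s.indicator fun n => (1 / 2 : ℝ) ^ n) :=
  summable_geometric_two.indicator s

theorem massBelow_nonneg (x : T) : 0 ≤ massBelow e x :=
  tsum_nonneg fun _ => indicator_nonneg (fun _ _ => by positivity) _

theorem massBelow_mono : Monotone (massBelow e) := fun _ _ hxy =>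
  (summable_indicator_geometric _).tsum_le_tsum
    (indicator_le_indicator_of_subset (preimage_mono (Iio_subset_Iio hxy)) fun _ => by positivity)
    (summable_indicator_geometric _)

theorem massBelow_lt_massBelow {x y : T} (hxy : x < y) (hx : x ∈ range e) :
    massBelow e x < massBelow e y := by
  obtain ⟨n, rfl⟩ := hx
  refine (summable_indicator_geometric _).tsum_lt_tsum (i := n)
    (indicator_le_indicator_of_subset (preimage_mono (Iio_subset_Iio hxy.le))
      fun _ => by positivity) ?_ (summable_indicator_geometric _)
  rw [indicator_of_notMem (show n ∉ e ⁻¹' Iio (e n) from lt_irrefl _),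
    indicator_of_mem (show n ∈ e ⁻¹' Iio y from hxy)]
  positivity

/-- Left continuity of `massBelow` at elements of limit rank. -/
theorem exists_lt_lt_massBelow (hdl : DownLinear T) {x : T} (hx : ¬SuccRank x) {c : ℝ}
    (hc : 0 ≤ c) (hcx : c < massBelow e x) : ∃ z < x, c < massBelow e z := by
  obtain ⟨F, hF⟩ := ((summable_indicator_geometric (e ⁻¹' Iio x)).hasSum.eventually
    (eventually_gt_nhds hcx)).exists
  classical
  simp only [indicator_apply, mem_preimage, mem_Iio] at hF
  rw [← Finset.sum_filter] at hF
  have hne : (F.filter fun n => e n < x).Nonempty := by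
    by_contra h
    rw [Finset.not_nonempty_iff_eq_empty.1 h, Finset.sum_empty] at hF
    exact hF.not_ge hc
  obtain ⟨z, hzx, hz⟩ := exists_forall_lt_of_not_succRank hdl hx hne
    fun n hn => (Finset.mem_filter.1 hn).2
  refine ⟨z, hzx, hF.trans_le ?_⟩
  calc ∑ n ∈ F with e n < x, (1 / 2 : ℝ) ^ n
      = ∑ n ∈ F with e n < x, (e ⁻¹' Iio z).indicator (fun n => (1 / 2 : ℝ) ^ n) n :=
        Finset.sum_congr rfl fun n hn =>
          (indicator_of_mem (show n ∈ e ⁻¹' Iio z from hz n hn) _).symm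
    _ ≤ massBelow e z := (summable_indicator_geometric _).sum_le_tsum _
        (fun _ _ => indicator_nonneg (fun _ _ => by positivity) _)

end Mass

namespace Road

variable {T : Type*} [PartialOrder T]

def base (p : Road T) : T := (ofLex p.val).1

def height (p : Road T) : ℝ := (ofLex p.val).2

def mk (x : T) (t : ℝ) (ht : t ∈ Ioc 0 1) (h : t = 1 ∨ SuccRank x) : Road T :=
  ⟨toLex (x, ⟨t, ht⟩), h⟩

def node (x : T) : Road T := mk x 1 (right_mem_Ioc.2 one_pos) (Or.inl rfl)

theorem height_mem_Ioc (p : Road T) : height p ∈ Ioc 0 1 := (ofLex p.val).2.2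

theorem height_eq_one_or_succRank (p : Road T) : height p = 1 ∨ SuccRank (base p) := p.2

theorem le_iff {p q : Road T} :
    p ≤ q ↔ base p < base q ∨ base p = base q ∧ height p ≤ height q :=
  Prod.Lex.le_iff

theorem lt_iff {p q : Road T} :
    p < q ↔ base p < base q ∨ base p = base q ∧ height p < height q :=
  Prod.Lex.lt_iff

theorem base_mono : Monotone (base : Road T → T) := fun _ _ h =>
  (le_iff.1 h).elim le_of_lt fun h => h.1.le

theorem le_or_le_of_base {p q : Road T} (h : base p ≤ base q ∨ base q ≤ base p) :
    p ≤ q ∨ q ≤ p := by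
  rcases eq_or_ne (base p) (base q) with hpq | hpq
  · exact (le_total (height p) (height q)).imp (fun h => le_iff.2 (Or.inr ⟨hpq, h⟩))
      fun h => le_iff.2 (Or.inr ⟨hpq.symm, h⟩)
  · exact h.imp (fun h => le_iff.2 (Or.inl (h.lt_of_ne hpq)))
      fun h => le_iff.2 (Or.inl (h.lt_of_ne hpq.symm))

theorem le_node_iff {p : Road T} {x : T} : p ≤ node x ↔ base p ≤ x := by
  refine ⟨fun h => base_mono h, fun h => le_iff.2 ?_⟩
  exact h.lt_or_eq.imp_right fun h => ⟨h, (height_mem_Ioc p).2⟩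

theorem node_le_of_lt {p : Road T} {x : T} (h : x < base p) : node x ≤ p :=
  le_iff.2 (Or.inl h)

theorem isRooted (h : IsRooted T) : IsRooted (Road T) := by
  obtain ⟨r, hr⟩ := h
  refine ⟨node r, fun p => ?_⟩
  rcases (hr (base p)).lt_or_eq with hrp | hrp
  · exact node_le_of_lt hrp
  · refine le_iff.2 (Or.inr ⟨hrp, ?_⟩)
    rcases height_eq_one_or_succRank p with h1 | ⟨y, hy, -⟩
    · exact h1.ge
    · exact absurd (hr y) (hrp ▸ hy).not_ge

theorem downLinear (h : DownLinear T) : DownLinear (Road T) := fun _ _ _ hq hz =>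
  le_or_le_of_base (h _ _ _ (base_mono hq) (base_mono hz))

theorem exists_isGLB (hH : ∀ x y : T, ∃ m : T, IsGLB {x, y} m) (p q : Road T) :
    ∃ m : Road T, IsGLB {p, q} m := by
  by_cases hpq : base p ≤ base q ∨ base q ≤ base p
  · rcases le_or_le_of_base hpq with h | h
    · exact ⟨p, IsLeast.isGLB ⟨mem_insert p _, by simp [h]⟩⟩
    · exact ⟨q, IsLeast.isGLB ⟨mem_insert_of_mem p rfl, by simp [h]⟩⟩
  obtain ⟨m, hm⟩ := hH (base p) (base q)
  have hmp : m < base p := (hm.1 (mem_insert _ _)).lt_of_ne fun h => hpq (Or.inl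
    (h ▸ hm.1 (mem_insert_of_mem _ rfl)))
  have hmq : m < base q := (hm.1 (mem_insert_of_mem _ rfl)).lt_of_ne fun h => hpq (Or.inr
    (h ▸ hm.1 (mem_insert _ _)))
  refine ⟨node m, ?_, fun z hz => le_node_iff.2 (hm.2 ?_)⟩
  · simp [lowerBounds, node_le_of_lt hmp, node_le_of_lt hmq]
  · simp only [lowerBounds_insert, lowerBounds_singleton, mem_inter_iff, mem_Iic] at hz ⊢
    exact ⟨base_mono hz.1, base_mono hz.2⟩

theorem mem_of_isChain_insert_base {B : Set (Road T)} (hB : IsMaxChain (· ≤ ·) B) {p : Road T}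
    (hp : IsChain (· ≤ ·) (insert (base p) (base '' B))) : p ∈ B :=
  hB.mem_of_isChain_insert <| hB.isChain.insert fun q hq _ => le_or_le_of_base <| by
    rcases eq_or_ne (base p) (base q) with h | h
    · exact Or.inl h.le
    · exact hp (mem_insert _ _) (mem_insert_of_mem _ (mem_image_of_mem _ hq)) h

theorem isMaxChain_image_base {B : Set (Road T)} (hB : IsMaxChain (· ≤ ·) B) :
    IsMaxChain (· ≤ ·) (base '' B) := by
  refine ⟨base_mono.isChain_image hB.isChain, fun C hC hBC => hBC.antisymm fun x hx => ?_⟩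
  have hxB : node x ∈ B := mem_of_isChain_insert_base hB (hC.mono (insert_subset hx hBC))
  exact ⟨node x, hxB, rfl⟩

theorem preimage_image_base {B : Set (Road T)} (hB : IsMaxChain (· ≤ ·) B) :
    base ⁻¹' (base '' B) = B :=
  (subset_preimage_image _ _).antisymm' fun p hp => mem_of_isChain_insert_base hB <| by
    rw [insert_eq_of_mem (show base p ∈ base '' B from hp)]
    exact (isMaxChain_image_base hB).isChain

variable (e : ℕ → T)

/-- The fibre over `x` fills the gap between the masses below `x` and below its immediate
predecessor, a gap of length the weight of that predecessor. -/
noncomputable def grade (p : Road T) : ℝ :=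
  massBelow e (immediatePred (base p)) +
    height p * (massBelow e (base p) - massBelow e (immediatePred (base p)))

theorem grade_mk (x : T) (t : ℝ) (ht : t ∈ Ioc 0 1) (h : t = 1 ∨ SuccRank x) :
    grade e (mk x t ht h) =
      massBelow e (immediatePred x) + t * (massBelow e x - massBelow e (immediatePred x)) :=
  rfl

theorem grade_node (x : T) : grade e (node x) = massBelow e x := by
  rw [node, grade_mk]; ring

theorem grade_nonneg (p : Road T) : 0 ≤ grade e p :=
  add_nonneg (massBelow_nonneg e _) (mul_nonneg (height_mem_Ioc p).1.le
    (sub_nonneg.2 (massBelow_mono e (immediatePred_le _))))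

theorem grade_le_massBelow (p : Road T) : grade e p ≤ massBelow e (base p) := by
  have h := mul_le_of_le_one_left (sub_nonneg.2 (massBelow_mono e (immediatePred_le (base p))))
    (height_mem_Ioc p).2
  rw [grade]; linarith

theorem massBelow_lt_grade {p : Road T} {y : T} (hy : y < base p) (hye : y ∈ range e)
    (hpred : immediatePred (base p) ∈ range e) : massBelow e y < grade e p := by
  by_cases h : SuccRank (base p)
  · have hgap := massBelow_lt_massBelow e (immediatePred_lt h) hpred
    have := mul_pos (height_mem_Ioc p).1 (sub_pos.2 hgap)
    have := massBelow_mono e (le_immediatePred h hy)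
    rw [grade]; linarith
  · rw [grade, immediatePred_of_not_succRank h, sub_self, mul_zero, add_zero]
    exact massBelow_lt_massBelow e hy hye

theorem grade_lt_grade_of_base_eq {p q : Road T} (hb : base p = base q)
    (hh : height p < height q) (hpred : immediatePred (base p) ∈ range e) :
    grade e p < grade e q := by
  have h : SuccRank (base p) := (height_eq_one_or_succRank p).resolve_left
    (hh.trans_le (height_mem_Ioc q).2).ne
  have hgap := massBelow_lt_massBelow e (immediatePred_lt h) hpred
  have := mul_lt_mul_of_pos_right hh (sub_pos.2 hgap)
  rw [grade, grade, ← hb]; linarith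

theorem grade_strictMonoOn (hdown : ∀ x ∈ range e, ∀ y ≤ x, y ∈ range e) :
    StrictMonoOn (grade e) (base ⁻¹' range e) := fun p hp q hq hpq => by
  rcases lt_iff.1 hpq with hb | ⟨hb, hh⟩
  · exact (grade_le_massBelow e p).trans_lt
      (massBelow_lt_grade e hb hp (hdown _ hq _ (immediatePred_le _)))
  · exact grade_lt_grade_of_base_eq e hb hh (hdown _ hp _ (immediatePred_le _))

theorem exists_grade_eq (hdl : DownLinear T) {w : T} {c : ℝ} (hc : 0 ≤ c)
    (hcw : c ≤ massBelow e w) (hlt : ∀ z < w, massBelow e z < c) :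
    ∃ p : Road T, base p = w ∧ grade e p = c := by
  rcases hcw.eq_or_lt with rfl | hcw
  · exact ⟨node w, rfl, grade_node e w⟩
  have h : SuccRank w := by
    by_contra h
    obtain ⟨z, hzw, hcz⟩ := exists_lt_lt_massBelow e hdl h hc hcw
    exact (hlt z hzw).not_gt hcz
  set a := massBelow e (immediatePred w)
  set b := massBelow e w
  have ha : a < c := hlt _ (immediatePred_lt h)
  have hab : 0 < b - a := by linarith
  refine ⟨mk w ((c - a) / (b - a))
    (mem_Ioc.2 ⟨div_pos (by linarith) hab, (div_le_one hab).2 (by linarith)⟩) (Or.inr h), rfl, ?_⟩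
  rw [grade_mk]
  field_simp
  ring

theorem ordConnected_image_grade (hdl : DownLinear T) (hwf : ∀ x : T, (Iio x).IsWF)
    (hchain : IsChain (· ≤ ·) (range e)) (hdown : ∀ x ∈ range e, ∀ y ≤ x, y ∈ range e) :
    (grade e '' (base ⁻¹' range e)).OrdConnected := by
  refine ⟨?_⟩
  rintro _ ⟨p, -, rfl⟩ _ ⟨q, hq, rfl⟩ c ⟨hpc, hcq⟩
  obtain ⟨w, ⟨hwe, hcw⟩, hleast⟩ := (hchain.mono (sep_subset (range e) (c ≤ massBelow e ·)))
    |>.exists_isLeast hwf ⟨base q, hq, hcq.trans (grade_le_massBelow e q)⟩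
  have hlt : ∀ z < w, massBelow e z < c := fun z hzw =>
    lt_of_not_ge fun hcz => (hleast ⟨hdown w hwe z hzw.le, hcz⟩).not_gt hzw
  obtain ⟨p', hp'w, hp'c⟩ := exists_grade_eq e hdl ((grade_nonneg e p).trans hpc) hcw hlt
  exact ⟨p', show base p' ∈ range e from hp'w ▸ hwe, hp'c⟩

theorem exists_ordConnected_orderIso [Nonempty T] (hdl : DownLinear T)
    (hwf : ∀ x : T, (Iio x).IsWF) {B : Set (Road T)} (hB : IsMaxChain (· ≤ ·) B)
    (hcount : (base '' B).Countable) : ∃ I : Set ℝ, I.OrdConnected ∧ Nonempty (B ≃o I) := by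
  have hC := isMaxChain_image_base hB
  obtain ⟨e, he⟩ := hcount.exists_eq_range (hC.nonempty_iff.1 inferInstance)
  have hdown : ∀ x ∈ range e, ∀ y ≤ x, y ∈ range e := he ▸ fun _ hx _ hy => hC.mem_of_le hdl hx hy
  have hBe : B = base ⁻¹' range e := by rw [← he, preimage_image_base hB]
  rw [hBe]
  exact ⟨_, ordConnected_image_grade e hdl hwf (he ▸ hC.isChain) hdown,
    (hBe ▸ hB.isChain).nonempty_orderIso_image (grade_strictMonoOn e hdown)⟩

end Road

/-- The road space of a Hausdorff well-stratified tree with no uncountable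
branches is a branchwise-real tree order. -/
theorem road_space_isBRTO (T : Type*) [PartialOrder T]
    (hT : IsWSTree T)
    (hH : ∀ x y : T, ∃ m : T, IsGLB {x, y} m)
    (hcb : ∀ B : Set T, IsMaxChain (· ≤ ·) B → B.Countable) :
    IsBRTO (Road T) := by
  obtain ⟨hroot, hdl, hwf⟩ := hT
  have : Nonempty T := hroot.nonempty
  exact ⟨Road.isRooted hroot, Road.downLinear hdl,
    fun B hB => Road.exists_ordConnected_orderIso hdl hwf hB
      (hcb _ (Road.isMaxChain_image_base hB)),
    Road.exists_isGLB hH⟩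
end

section
/- There exists a well-stratified tree with no uncountable branches which admits no strictly monotonic map into ℝ. -/
/-!
Split `ω₁` into two stationary sets (Ulam) and let `S` be one of them. The tree `T(S)` of closed
bounded subsets of `S`, ordered by end-extension, has only countable branches: the union of an
uncountable chain would be a club inside `S`, missing the stationary set `Sᶜ`.
If `f : T(S) → ℝ` were strictly increasing (and, after `arctan`, bounded), pick `δ ∈ S` closed
under a strategy that pushes `f` towards its supremum on cones. Played along an enumeration of the
ordinals below `δ`, the strategy produces a run whose union together with `δ` is a node; there `f`
already attains the supremum of its cone, which is impossible since every node has a strict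
extension.
-/

open Cardinal Order Set

universe u

/-- For a well-order, these two conditions say exactly that its order type is `ω₁`. -/
class IsOmegaOne (α : Type u) [LinearOrder α] : Prop where
  cof_eq : Order.cof α = ℵ₁
  countable_Iio (a : α) : (Iio a).Countable

namespace IsOmegaOne

variable {α : Type u} [LinearOrder α] [IsOmegaOne α]

theorem cof_ne_aleph0 : Order.cof α ≠ ℵ₀ := by
  rw [cof_eq]
  exact aleph0_lt_aleph_one.ne'

theorem exists_forall_lt_of_countable {s : Set α} (hs : s.Countable) : ∃ b, ∀ a ∈ s, a < b :=
  not_isCofinal_iff.1 fun h ↦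
    ((cof_le h).trans hs.le_aleph0).not_gt (cof_eq (α := α) ▸ aleph0_lt_aleph_one)

theorem bddAbove_of_countable {s : Set α} (hs : s.Countable) : BddAbove s :=
  let ⟨b, hb⟩ := exists_forall_lt_of_countable hs
  ⟨b, fun a ha ↦ (hb a ha).le⟩

instance : NoMaxOrder α :=
  ⟨fun a ↦ by simpa using exists_forall_lt_of_countable (countable_singleton a)⟩

instance : Uncountable α :=
  ⟨fun _ ↦ by
    obtain ⟨b, hb⟩ := exists_forall_lt_of_countable (countable_univ (α := α))
    exact (hb b (mem_univ b)).false⟩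

end IsOmegaOne

section LinearOrder

variable {α : Type u} [LinearOrder α]

theorem isClub_Ioi [NoMaxOrder α] (a : α) : IsClub (Ioi a) := by
  refine ⟨(isUpperSet_Ioi a).dirSupClosed, fun x ↦ ?_⟩
  obtain ⟨b, hb⟩ := exists_gt (max a x)
  exact ⟨b, (le_max_left a x).trans_lt hb, (le_max_right a x).trans hb.le⟩

theorem IsStationary.exists_gt [NoMaxOrder α] {S : Set α} (hS : IsStationary S) (a : α) :
    ∃ b ∈ S, a < b :=
  hS (isClub_Ioi a)

theorem IsLUB.exists_mem_forall_lt_of_finite {d s : Set α} {a : α} (ha : IsLUB d a)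
    (hd : d.Nonempty) (hs : s.Finite) (hsa : ∀ t ∈ s, t < a) : ∃ c ∈ d, ∀ t ∈ s, t < c := by
  obtain rfl | hs₀ := s.eq_empty_or_nonempty
  · exact hd.imp fun c hc ↦ ⟨hc, by simp⟩
  obtain ⟨m, hm, hmax⟩ := exists_max_image s id hs hs₀
  obtain ⟨c, hc, hmc⟩ := (lt_isLUB_iff ha).1 (hsa m hm)
  exact ⟨c, hc, fun t ht ↦ (hmax t ht).trans_lt hmc⟩

/-- Ulam's argument: for each `β`, some fibre `A n β` of the enumerations of the initial segments
must be stationary, and two distinct `β` with the same `n` give disjoint stationary fibres. -/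
theorem exists_isStationary_and_isStationary_compl [WellFoundedLT α] [IsOmegaOne α] :
    ∃ S : Set α, IsStationary S ∧ IsStationary Sᶜ := by
  choose e he using fun δ : α ↦ (IsOmegaOne.countable_Iio δ).to_subtype.exists_injective_nat
  let A : ℕ → α → Set α := fun n β ↦ {δ | ∃ h : β < δ, e δ ⟨β, h⟩ = n}
  have hA : ∀ β, ∃ n, IsStationary (A n β) := fun β ↦
    (isStationary_iUnion_iff_of_countable IsOmegaOne.cof_ne_aleph0).1 <|
      ((isClub_Ioi β).isStationary IsOmegaOne.cof_ne_aleph0).mono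
        fun δ hδ ↦ mem_iUnion.2 ⟨_, hδ, rfl⟩
  choose n hn using hA
  obtain ⟨β₁, β₂, hn₁₂, hne⟩ :=
    Function.not_injective_iff.1 fun h ↦ not_countable (α := α) (h.countable (β := ℕ))
  refine ⟨A (n β₁) β₁, hn β₁, (hn β₂).mono ?_⟩
  rintro δ ⟨h₂, he₂⟩ ⟨h₁, he₁⟩
  exact hne (congrArg Subtype.val (he δ (he₁.trans (hn₁₂.trans he₂.symm))))

end LinearOrder

theorem isClub_setOf_forall_lt_list {α : Type u} [ConditionallyCompleteLinearOrderBot α]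
    [IsOmegaOne α] (F : List α → α) :
    IsClub {δ | ∀ l : List α, (∀ t ∈ l, t < δ) → F l < δ} := by
  refine ⟨fun d hdC hd _ a ha l hl ↦ ?_, fun β ↦ ?_⟩
  · obtain ⟨c, hc, hlc⟩ := ha.exists_mem_forall_lt_of_finite hd l.finite_toSet hl
    exact (hdC hc l hlc).trans_le (ha.1 hc)
  have hnext : ∀ γ : α, ∃ γ', ∀ l : List α, (∀ t ∈ l, t < γ) → F l < γ' := fun γ ↦ by
    have := (IsOmegaOne.countable_Iio γ).to_subtype
    obtain ⟨γ', hγ'⟩ := IsOmegaOne.exists_forall_lt_of_countable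
      (countable_range fun l : List (Iio γ) ↦ F (l.map Subtype.val))
    refine ⟨γ', fun l hl ↦ ?_⟩
    lift l to List (Iio γ) using hl
    exact hγ' _ ⟨l, rfl⟩
  choose next hnext using hnext
  have hbdd : BddAbove (range fun n ↦ next^[n] β) :=
    IsOmegaOne.bddAbove_of_countable (countable_range _)
  refine ⟨⨆ n, next^[n] β, fun l hl ↦ ?_, le_ciSup hbdd 0⟩
  obtain ⟨_, ⟨n, rfl⟩, hln⟩ := (isLUB_ciSup hbdd).exists_mem_forall_lt_of_finite
    (range_nonempty _) l.finite_toSet hl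
  calc F l < next (next^[n] β) := hnext _ l hln
    _ = next^[n + 1] β := (Function.iterate_succ_apply' ..).symm
    _ ≤ _ := le_ciSup hbdd (n + 1)

section ConeSup

variable {P : Type*} [Preorder P] (f : P → ℝ) {x y : P}

/-- Junk (`0`) unless `f` is bounded above on `Ici x`. -/
noncomputable def coneSup (x : P) : ℝ := sSup (f '' Ici x)

variable {f}

theorem le_coneSup (hf : BddAbove (range f)) (h : x ≤ y) : f y ≤ coneSup f x :=
  le_csSup (hf.mono (image_subset_range _ _)) ⟨y, h, rfl⟩

theorem coneSup_anti (hf : BddAbove (range f)) (h : x ≤ y) : coneSup f y ≤ coneSup f x :=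
  csSup_le (nonempty_Ici.image f) <| by
    rintro _ ⟨z, hz, rfl⟩
    exact le_coneSup hf (h.trans hz)

theorem exists_le_sub_lt_coneSup (x : P) {ε : ℝ} (hε : 0 < ε) :
    ∃ y, x ≤ y ∧ coneSup f x - ε < f y := by
  obtain ⟨_, ⟨y, hxy, rfl⟩, hy⟩ :=
    exists_lt_of_lt_csSup (nonempty_Ici.image f) (sub_lt_self (coneSup f x) hε)
  exact ⟨y, hxy, hy⟩

end ConeSup

/-- The tree `T(S)`, ordered by end-extension. In `ω₁` the bounded subsets are the countable ones. -/
structure ClosedSubsetTree {α : Type u} [Preorder α] (S : Set α) where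
  carrier : Set α
  subset : carrier ⊆ S
  dirSupClosed : DirSupClosed carrier
  bddAbove : BddAbove carrier

namespace ClosedSubsetTree

section Preorder

variable {α : Type u} [Preorder α] {S : Set α}

@[ext]
theorem ext {x y : ClosedSubsetTree S} (h : x.carrier = y.carrier) : x = y := by
  cases x; cases y; congr

instance : PartialOrder (ClosedSubsetTree S) where
  le x y := x.carrier ⊆ y.carrier ∧ ∀ a ∈ x.carrier, ∀ b ∈ y.carrier, b ≤ a → b ∈ x.carrier
  le_refl x := ⟨subset_rfl, fun _ _ _ hb _ ↦ hb⟩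
  le_trans x y z hxy hyz :=
    ⟨hxy.1.trans hyz.1, fun a ha b hb hba ↦ hxy.2 a ha b (hyz.2 a (hxy.1 ha) b hb hba) hba⟩
  le_antisymm x y hxy hyx := ext (hxy.1.antisymm hyx.1)

instance [Nonempty α] : OrderBot (ClosedSubsetTree S) where
  bot := ⟨∅, empty_subset S, .empty, bddAbove_empty⟩
  bot_le _ := ⟨empty_subset _, fun _ ha ↦ ha.elim⟩

end Preorder

section LinearOrder

variable {α : Type u} [LinearOrder α] {S : Set α} {x y z : ClosedSubsetTree S}

theorem exists_mem_forall_lt_of_lt (h : x < y) : ∃ b ∈ y.carrier, ∀ a ∈ x.carrier, a < b := by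
  obtain ⟨b, hby, hbx⟩ := exists_of_ssubset <|
    h.le.1.ssubset_of_ne fun hxy ↦ h.ne (ext hxy)
  exact ⟨b, hby, fun a ha ↦ lt_of_not_ge fun hba ↦ hbx (h.le.2 a ha b hby hba)⟩

theorem le_total_of_le (hy : y ≤ x) (hz : z ≤ x) : y ≤ z ∨ z ≤ y := by
  by_cases hyz : y.carrier ⊆ z.carrier
  · exact .inl ⟨hyz, fun a ha b hb hba ↦ hy.2 a ha b (hz.1 hb) hba⟩
  obtain ⟨a, hay, haz⟩ := not_subset.1 hyz
  have hza : ∀ c ∈ z.carrier, c < a := fun c hc ↦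
    lt_of_not_ge fun hac ↦ haz (hz.2 c hc a (hy.1 hay) hac)
  exact .inr ⟨fun c hc ↦ hy.2 a hay c (hz.1 hc) (hza c hc).le,
    fun a ha b hb hba ↦ hz.2 a ha b (hy.1 hb) hba⟩

theorem mem_of_isChain {B : Set (ClosedSubsetTree S)} (hB : IsChain (· ≤ ·) B) (hx : x ∈ B)
    {e t : α} (he : e ∈ x.carrier) (ht : t ∈ ⋃ y ∈ B, y.carrier) (hte : t ≤ e) :
    t ∈ x.carrier := by
  obtain ⟨y, hy, hty⟩ := mem_iUnion₂.1 ht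
  obtain hyx | hxy := hB.total hy hx
  · exact hyx.1 hty
  · exact hxy.2 e he t hty hte

theorem exists_lt_mem_gt (hS : ∀ a, ∃ b ∈ S, a < b) (x : ClosedSubsetTree S) (β : α) :
    ∃ y, x < y ∧ ∃ c ∈ y.carrier, β < c := by
  obtain ⟨m, hm⟩ := x.bddAbove
  obtain ⟨c, hcS, hc⟩ := hS (max m β)
  have hxc : ∀ a ∈ x.carrier, a < c := fun a ha ↦ (hm ha).trans_lt ((le_max_left m β).trans_lt hc)
  let y : ClosedSubsetTree S :=
    ⟨insert c x.carrier, insert_subset hcS x.subset,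
      (PartialOrder.dirSupClosed_singleton c).union x.dirSupClosed, x.bddAbove.insert c⟩
  have hxy : x ≤ y := ⟨subset_insert c _, by
    rintro a ha b (rfl | hb) hba
    exacts [((hxc a ha).not_ge hba).elim, hb]⟩
  refine ⟨y, hxy.lt_of_ne fun h ↦ (hxc c ?_).false, c, mem_insert c _,
    (le_max_right m β).trans_lt hc⟩
  rw [h]
  exact mem_insert c _

theorem exists_forall_le_of_isChain {B : Set (ClosedSubsetTree S)} (hB : IsChain (· ≤ ·) B)
    {δ : α} (hδS : δ ∈ S) (hlt : ∀ y ∈ B, ∀ a ∈ y.carrier, a < δ)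
    (hcof : ∀ a < δ, ∃ y ∈ B, ∃ e ∈ y.carrier, a < e) : ∃ z : ClosedSubsetTree S, ∀ y ∈ B, y ≤ z := by
  set U := ⋃ y ∈ B, y.carrier
  have hUδ : ∀ t ∈ U, t < δ := fun t ht ↦
    let ⟨y, hy, hty⟩ := mem_iUnion₂.1 ht
    hlt y hy t hty
  have hclosed : DirSupClosed (insert δ U) := by
    refine dirSupClosed_iff_of_linearOrder.2 fun d hd hd₀ a ha ↦ ?_
    obtain rfl | haδ := (ha.2 fun t ht ↦ (hd ht).elim (·.le) fun htU ↦ (hUδ t htU).le).eq_or_lt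
    · exact mem_insert _ _
    obtain ⟨y, hy, e, he, hae⟩ := hcof a haδ
    have hdy : d ⊆ y.carrier := fun t ht ↦ (hd ht).elim
      (fun htδ ↦ ((ha.1 ht).trans_lt haδ).ne htδ |>.elim)
      fun htU ↦ mem_of_isChain hB hy he htU ((ha.1 ht).trans hae.le)
    exact mem_insert_of_mem _ (mem_iUnion₂.2 ⟨y, hy, dirSupClosed_iff_of_linearOrder.1 y.dirSupClosed hdy hd₀ ha⟩)
  refine ⟨⟨insert δ U, insert_subset hδS (iUnion₂_subset fun y _ ↦ y.subset), hclosed,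
    ⟨δ, fun t ht ↦ (ht.elim (·.le) fun htU ↦ (hUδ t htU).le)⟩⟩, fun y hy ↦ ⟨?_, ?_⟩⟩
  · exact fun t ht ↦ mem_insert_of_mem _ (mem_iUnion₂.2 ⟨y, hy, ht⟩)
  · rintro a ha b (rfl | hbU) hba
    exacts [((hlt y hy a ha).not_ge hba).elim, mem_of_isChain hB hy ha hbU hba]

theorem isClub_biUnion_of_isChain {B : Set (ClosedSubsetTree S)} (hB : IsChain (· ≤ ·) B)
    (hU : IsCofinal (⋃ y ∈ B, y.carrier)) : IsClub (⋃ y ∈ B, y.carrier) := by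
  refine ⟨dirSupClosed_iff_of_linearOrder.2 fun d hd hd₀ a ha ↦ ?_, hU⟩
  obtain ⟨e, he, hae⟩ := hU a
  obtain ⟨y, hy, hey⟩ := mem_iUnion₂.1 he
  have hdy : d ⊆ y.carrier := fun t ht ↦ mem_of_isChain hB hy hey (hd ht) ((ha.1 ht).trans hae)
  exact mem_iUnion₂.2 ⟨y, hy, dirSupClosed_iff_of_linearOrder.1 y.dirSupClosed hdy hd₀ ha⟩

end LinearOrder

section WellOrder

variable {α : Type u} [ConditionallyCompleteLinearOrderBot α] {S : Set α} {x y : ClosedSubsetTree S}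

noncomputable def bound (x : ClosedSubsetTree S) : α := sInf {b | ∀ a ∈ x.carrier, a < b}

theorem bound_le {b : α} (hb : ∀ a ∈ x.carrier, a < b) : x.bound ≤ b :=
  csInf_le (OrderBot.bddBelow _) hb

variable [WellFoundedLT α] [NoMaxOrder α]

theorem lt_bound {a : α} (ha : a ∈ x.carrier) : a < x.bound := by
  obtain ⟨m, hm⟩ := x.bddAbove
  obtain ⟨b, hb⟩ := exists_gt m
  exact csInf_mem (s := {b | ∀ a ∈ x.carrier, a < b}) ⟨b, fun a ha ↦ (hm ha).trans_lt hb⟩ a ha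

theorem bound_strictMono : StrictMono (bound : ClosedSubsetTree S → α) := fun _ _ h ↦
  let ⟨_, hby, hb⟩ := exists_mem_forall_lt_of_lt h
  (bound_le hb).trans_lt (lt_bound hby)

theorem isWSTree : IsWSTree (ClosedSubsetTree S) :=
  have := bound_strictMono (S := S).wellFoundedLT
  ⟨⟨⊥, fun _ ↦ bot_le⟩, fun _ _ _ ↦ le_total_of_le, fun _ ↦ .of_wellFoundedLT _⟩

/-- A chain whose union is bounded injects, through `bound`, into a proper initial segment;
an unbounded one has a club union inside `S`. -/
theorem countable_of_isChain [IsOmegaOne α] (hS : IsStationary Sᶜ) {B : Set (ClosedSubsetTree S)}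
    (hB : IsChain (· ≤ ·) B) : B.Countable := by
  by_cases hU : IsCofinal (⋃ y ∈ B, y.carrier)
  · obtain ⟨a, haS, haU⟩ := hS (isClub_biUnion_of_isChain hB hU)
    obtain ⟨y, -, hay⟩ := mem_iUnion₂.1 haU
    exact (haS (y.subset hay)).elim
  obtain ⟨c, hc⟩ := not_isCofinal_iff.1 hU
  obtain ⟨c', hcc'⟩ := exists_gt c
  refine MapsTo.countable_of_injOn (f := bound) (t := Iio c') ?_ ?_ (IsOmegaOne.countable_Iio c')
  · exact fun y hy ↦ (bound_le fun a ha ↦ hc a (mem_iUnion₂.2 ⟨y, hy, ha⟩)).trans_lt hcc'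
  · intro y hy y' hy' h
    obtain hyy' | hy'y := hB.total hy hy'
    · exact hyy'.eq_of_not_lt fun hlt ↦ (bound_strictMono hlt).ne h
    · exact (hy'y.eq_of_not_lt fun hlt ↦ (bound_strictMono hlt).ne h.symm).symm

end WellOrder

section Run

variable {α : Type u} [ConditionallyCompleteLinearOrderBot α] [WellFoundedLT α] [IsOmegaOne α]
  {S : Set α}

/-- Choose `δ ∈ S` closed under the bounds of all finite plays of `N` and feed `N` an enumeration
of `Iio δ`: the run is cofinal in `δ` and stays below it, so it closes off at `δ`. -/
theorem exists_run_bddAbove (hS : IsStationary S)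
    (N : ClosedSubsetTree S → α → ℕ → ClosedSubsetTree S) (hN_le : ∀ x β k, x ≤ N x β k)
    (hN_mem : ∀ x β k, ∃ c ∈ (N x β k).carrier, β < c) :
    ∃ (x : ℕ → ClosedSubsetTree S) (β : ℕ → α), (∀ k, x (k + 1) = N (x k) (β k) k) ∧
      ∃ z, ∀ k, x k ≤ z := by
  let G : List α → ClosedSubsetTree S := fun l ↦ l.rec ⊥ fun β l y ↦ N y β l.length
  obtain ⟨δ, hδS, hδ⟩ := hS (isClub_setOf_forall_lt_list fun l ↦ (G l).bound)
  obtain ⟨h, hh⟩ := (IsOmegaOne.countable_Iio δ).exists_eq_range ⟨_, hδ [] (by simp)⟩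
  let L : ℕ → List α := fun k ↦ (List.range k).reverse.map h
  have hL : ∀ k, L (k + 1) = h k :: L k := fun k ↦ by simp [L, List.range_succ]
  have hx : ∀ k, G (L (k + 1)) = N (G (L k)) (h k) k := fun k ↦ by
    rw [hL]
    simp [G, L]
  refine ⟨fun k ↦ G (L k), h, hx, ?_⟩
  have hmono : Monotone fun k ↦ G (L k) := monotone_nat_of_le_succ fun k ↦ hx k ▸ hN_le _ _ _
  have hlt : ∀ k, ∀ a ∈ (G (L k)).carrier, a < δ := fun k a ha ↦
    (lt_bound ha).trans <| hδ _ fun t ht ↦ by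
      obtain ⟨i, -, rfl⟩ := List.mem_map.1 ht
      exact hh.ge (mem_range_self i)
  have hcof : ∀ a < δ, ∃ k, ∃ e ∈ (G (L k)).carrier, a < e := fun a ha ↦ by
    obtain ⟨j, rfl⟩ : a ∈ range h := hh ▸ ha
    exact ⟨j + 1, hx j ▸ hN_mem _ _ _⟩
  obtain ⟨z, hz⟩ := exists_forall_le_of_isChain hmono.isChain_range hδS
    (forall_mem_range.2 hlt) fun a ha ↦
    let ⟨k, hk⟩ := hcof a ha
    ⟨_, mem_range_self k, hk⟩
  exact ⟨z, fun k ↦ hz _ (mem_range_self k)⟩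

/-- Greedily approaching `coneSup f` along a bounded run, the upper bound `z` of the run gets
`coneSup f z ≤ f z`, which no strict extension of `z` can respect. -/
theorem not_strictMono_of_bddAbove (hS : IsStationary S) {f : ClosedSubsetTree S → ℝ}
    (hbdd : BddAbove (range f)) : ¬ StrictMono f := by
  intro hf
  have hstep : ∀ x (β : α) (k : ℕ), ∃ y, x ≤ y ∧ (∃ c ∈ y.carrier, β < c) ∧
      coneSup f x - 1 / (k + 1) < f y := fun x β k ↦ by
    obtain ⟨y₀, hxy₀, hy₀⟩ := exists_le_sub_lt_coneSup (f := f) x (Nat.one_div_pos_of_nat (n := k))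
    obtain ⟨y, hy₀y, hy⟩ := exists_lt_mem_gt hS.exists_gt y₀ β
    exact ⟨y, hxy₀.trans hy₀y.le, hy, hy₀.trans (hf hy₀y)⟩
  choose N hN_le hN_mem hN_lt using hstep
  obtain ⟨x, β, hx, z, hz⟩ := exists_run_bddAbove hS N hN_le hN_mem
  have hz_max : coneSup f z ≤ f z := le_of_forall_pos_lt_add fun ε hε ↦ by
    obtain ⟨k, hk⟩ := exists_nat_one_div_lt hε
    calc coneSup f z ≤ coneSup f (x k) := coneSup_anti hbdd (hz k)
      _ < f (x (k + 1)) + 1 / (k + 1) := by linarith [hx k ▸ hN_lt (x k) (β k) k]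
      _ ≤ f z + ε := add_le_add (hf.monotone (hz _)) hk.le
  obtain ⟨y, hzy, -⟩ := exists_lt_mem_gt hS.exists_gt z ⊥
  exact (hf hzy).not_ge ((le_coneSup hbdd hzy.le).trans hz_max)

theorem not_exists_strictMono (hS : IsStationary S) :
    ¬ ∃ f : ClosedSubsetTree S → ℝ, StrictMono f := fun ⟨_, hf⟩ ↦
  not_strictMono_of_bddAbove hS
    ⟨Real.pi / 2, forall_mem_range.2 fun _ ↦ (Real.arctan_lt_pi_div_two _).le⟩
    (Real.arctan_strictMono.comp hf)

end Run

end ClosedSubsetTree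

open Ordinal in
instance Ordinal.isOmegaOne_Iio_omega_one : IsOmegaOne (Iio (ω₁ : Ordinal.{u})) where
  cof_eq := by simp [Ordinal.cof_Iio]
  countable_Iio a := by
    have ha : (Iio a.1).Countable := by
      rw [← le_aleph0_iff_set_countable, Cardinal.mk_Iio_ordinal,
        ← Cardinal.lift_aleph0.{u + 1, u}, Cardinal.lift_le, ← lt_aleph_one_iff]
      exact lt_omega_iff_card_lt.1 a.2
    exact ha.preimage Subtype.val_injective

/-- There is a well-stratified tree with no uncountable branches admitting no
strictly monotonic map into ℝ. -/
theorem exists_wstree_no_uncountable_branches_no_real_grading :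
    ∃ (T : Type 1) (_ : PartialOrder T),
      IsWSTree T ∧ (∀ B : Set T, IsMaxChain (· ≤ ·) B → B.Countable) ∧
        ¬ ∃ f : T → ℝ, StrictMono f := by
  open Ordinal in
  let _ := WellFoundedLT.toOrderBot (Iio (ω₁ : Ordinal.{0}))
  let _ := WellFoundedLT.conditionallyCompleteLinearOrderBot (Iio (ω₁ : Ordinal.{0}))
  obtain ⟨S, hS, hSc⟩ := exists_isStationary_and_isStationary_compl (α := Iio (ω₁ : Ordinal.{0}))
  exact ⟨ClosedSubsetTree S, inferInstance, ClosedSubsetTree.isWSTree,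
    fun _ hB ↦ ClosedSubsetTree.countable_of_isChain hSc hB.1,
    ClosedSubsetTree.not_exists_strictMono hS⟩
end

section
/- Every branchwise-real tree order is a complete meet-semilattice: every nonempty subset S has a greatest lower bound. -/
/-- A branchwise-real tree order is a complete meet-semilattice: every
nonempty subset has a greatest lower bound. -/
theorem brto_complete_meet_semilattice (X : Type*) [PartialOrder X]
    (hX : IsBRTO X) (S : Set X) (hS : S.Nonempty) :
    ∃ m : X, IsGLB S m := by
  obtain ⟨⟨r, hr⟩, hdl, hbr, hmeet⟩ := hX
  obtain ⟨x₀, hx₀⟩ := hS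
  have hchain : IsChain (· ≤ ·) (Set.Iic x₀) := fun a ha b hb _ => hdl x₀ a b ha hb
  obtain ⟨B, hBmax, hsub⟩ := hchain.exists_maxChain
  obtain ⟨I, hIoc, ⟨e⟩⟩ := hbr B hBmax
  set ℓ : B → ℝ := fun b => (e b : ℝ) with hℓ
  have hmono : ∀ b c : B, ℓ b ≤ ℓ c ↔ (b : X) ≤ (c : X) := by
    intro b c
    rw [show (ℓ b ≤ ℓ c) ↔ (e b ≤ e c) from Subtype.coe_le_coe, e.le_iff_le,
      Subtype.coe_le_coe]
  have hx₀B : x₀ ∈ B := hsub (le_refl x₀)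
  have hrB : r ∈ B := hsub (hr x₀)
  have hLB : ∀ l ∈ lowerBounds S, l ∈ B := fun l hl => hsub (hl hx₀)
  set A : Set ℝ := ℓ '' {b : B | (b : X) ∈ lowerBounds S} with hA
  have hrL : r ∈ lowerBounds S := fun x _ => hr x
  have hAne : A.Nonempty := ⟨ℓ ⟨r, hrB⟩, ⟨⟨r, hrB⟩, hrL, rfl⟩⟩
  have hub' : ∀ t ∈ A, t ≤ ℓ ⟨x₀, hx₀B⟩ := by
    rintro t ⟨b, hb, rfl⟩
    exact (hmono _ _).2 (hb hx₀)
  have hAbdd : BddAbove A := ⟨ℓ ⟨x₀, hx₀B⟩, hub'⟩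
  set s : ℝ := sSup A with hsdef
  have hs1 : ℓ ⟨r, hrB⟩ ≤ s := le_csSup hAbdd ⟨⟨r, hrB⟩, hrL, rfl⟩
  have hs2 : s ≤ ℓ ⟨x₀, hx₀B⟩ := csSup_le hAne hub'
  have hsI : s ∈ I := hIoc.out (e ⟨r, hrB⟩).2 (e ⟨x₀, hx₀B⟩).2 ⟨hs1, hs2⟩
  set m : B := e.symm ⟨s, hsI⟩ with hm
  have hℓm : ℓ m = s := by simp [hℓ, hm]
  have hub2 : ∀ l ∈ lowerBounds S, l ≤ (m : X) := by
    intro l hl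
    refine (hmono ⟨l, hLB l hl⟩ m).1 ?_
    rw [hℓm]
    exact le_csSup hAbdd ⟨⟨l, hLB l hl⟩, hl, rfl⟩
  have hmx₀ : (m : X) ≤ x₀ := (hmono m ⟨x₀, hx₀B⟩).1 (hℓm ▸ hs2)
  refine ⟨m, ?_, hub2⟩
  intro x hx
  obtain ⟨w, hw⟩ := hmeet m x
  have hwm : w ≤ (m : X) := hw.1 (Set.mem_insert _ _)
  have hwx : w ≤ x := hw.1 (Set.mem_insert_of_mem _ rfl)
  have hwB : w ∈ B := hsub (le_trans hwm hmx₀)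
  have hwub : ∀ l ∈ lowerBounds S, l ≤ w := by
    intro l hl
    refine hw.2 ?_
    rintro y (rfl | rfl)
    · exact hub2 l hl
    · exact hl hx
  have hsw : s ≤ ℓ ⟨w, hwB⟩ := by
    refine csSup_le hAne ?_
    rintro t ⟨b, hb, rfl⟩
    exact (hmono b ⟨w, hwB⟩).2 (hwub b hb)
  have : (m : X) ≤ w := (hmono m ⟨w, hwB⟩).1 (hℓm ▸ hsw)
  exact le_trans this hwx
end

section
/- If X is a branchwise-real tree order and T ⊆ X is a well-stratified subtree, then the cardinality of the set of branching nodes of T is at most the cardinality of the set of branching nodes of X. -/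
/-- A node `x` is branching if there are two elements strictly above `x`
lying in different connected components of the set above `x`, i.e. having no
common lower bound strictly above `x`. -/
def IsBranching {X : Type*} [PartialOrder X] (x : X) : Prop :=
  ∃ y z : X, x < y ∧ x < z ∧ ¬ ∃ w : X, x < w ∧ w ≤ y ∧ w ≤ z

/-- A well-stratified subtree of a tree order: a subset in which every
predecessor set (within the subset) is well-founded, hence (the ambient
predecessor sets being linear) well-ordered. -/
def IsWSSubtree {X : Type*} [PartialOrder X] (S : Set X) : Prop :=
  ∀ x ∈ S, Set.IsWF {y | y ∈ S ∧ y < x}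

/-- The set of branching nodes of a subset `S`, i.e. the nodes of `S` which
are branching with respect to the induced order on `S`. -/
def BranchingIn {X : Type*} [PartialOrder X] (S : Set X) : Set X :=
  {x | x ∈ S ∧ ∃ y ∈ S, ∃ z ∈ S, x < y ∧ x < z ∧
    ¬ ∃ w ∈ S, x < w ∧ w ≤ y ∧ w ≤ z}

/-- A well-stratified subtree of a branchwise-real tree order has no more
branching nodes than the ambient order. -/
theorem card_branching_subtree_le (X : Type*) [PartialOrder X]
    (hX : IsBRTO X) (T : Set X) (hT : IsWSSubtree T) :
    Cardinal.mk (BranchingIn T) ≤ Cardinal.mk {x : X // IsBranching x} := by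
  obtain ⟨-, hlin, -, hmeet⟩ := hX
  choose m hm using hmeet
  have hwit : ∀ p : BranchingIn T, ∃ y z : X, y ∈ T ∧ z ∈ T ∧ (p : X) < y ∧
      (p : X) < z ∧ ¬ ∃ w ∈ T, (p : X) < w ∧ w ≤ y ∧ w ≤ z := by
    intro p
    obtain ⟨-, y, hy, z, hz, h1, h2, h3⟩ := p.2
    exact ⟨y, z, hy, hz, h1, h2, h3⟩
  choose y z hyT hzT hxy hxz hno using hwit
  set g : BranchingIn T → X := fun p => m (y p) (z p) with hg
  have hglb : ∀ p, IsGLB {y p, z p} (g p) := fun p => hm _ _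
  have hgy : ∀ p, g p ≤ y p := fun p => (hglb p).1 (Set.mem_insert _ _)
  have hgz : ∀ p, g p ≤ z p := fun p =>
    (hglb p).1 (Set.mem_insert_of_mem _ rfl)
  have hxg : ∀ p : BranchingIn T, (p : X) ≤ g p := by
    intro p
    refine (hglb p).2 ?_
    rintro a (rfl | rfl)
    · exact (hxy p).le
    · exact (hxz p).le
  have hgylt : ∀ p, g p < y p := by
    intro p
    rcases lt_or_eq_of_le (hgy p) with h | h
    · exact h
    · exact absurd ⟨y p, hyT p, hxy p, le_refl _, h ▸ hgz p⟩ (hno p)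
  have hgzlt : ∀ p, g p < z p := by
    intro p
    rcases lt_or_eq_of_le (hgz p) with h | h
    · exact h
    · exact absurd ⟨z p, hzT p, hxz p, h ▸ hgy p, le_refl _⟩ (hno p)
  have hbr : ∀ p, IsBranching (g p) := by
    intro p
    refine ⟨y p, z p, hgylt p, hgzlt p, ?_⟩
    rintro ⟨w, hw1, hw2, hw3⟩
    have : w ≤ g p := by
      refine (hglb p).2 ?_
      rintro a (rfl | rfl)
      · exact hw2
      · exact hw3
    exact absurd this (not_le_of_gt hw1)
  have hinj : Function.Injective (fun p : BranchingIn T =>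
      (⟨g p, hbr p⟩ : {x : X // IsBranching x})) := by
    intro p q hpq
    have hgeq : g p = g q := congrArg Subtype.val hpq
    by_contra hne
    have hne' : (p : X) ≠ (q : X) := fun h => hne (Subtype.ext h)
    have hcomp := hlin (g p) (p : X) (q : X) (hxg p) (hgeq ▸ hxg q)
    rcases hcomp with h | h
    · have hlt : (p : X) < (q : X) := lt_of_le_of_ne h hne'
      exact hno p ⟨(q : X), q.2.1, hlt, le_trans (hgeq ▸ hxg q) (hgy p),
        le_trans (hgeq ▸ hxg q) (hgz p)⟩
    · have hlt : (q : X) < (p : X) := lt_of_le_of_ne h (Ne.symm hne')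
      exact hno q ⟨(p : X), p.2.1, hlt, le_trans (hgeq ▸ hxg p) (hgy q),
        le_trans (hgeq ▸ hxg p) (hgz q)⟩
  exact Cardinal.mk_le_of_injective hinj
end

section
/- A branchwise-real tree order admits a continuous grading if and only if it admits a strictly monotonic map into ℝ. -/
/-!
Fix a strictly monotone `f : X → ℝ` and apply Zorn's lemma to continuous gradings `ℓ ≤ f`
defined on nonempty lower sets `D`; the bound `f` keeps the suprema below finite. If `x ∉ D`,
then, `Iic x` being a compact real interval, its trace on `D` is `Iic z` or `Iio z`. In the
first case `ℓ` extends over `[z, x]`: along a parametrization `P` of `[z, x]` by a real interval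
one needs a continuous strictly increasing minorant of `f ∘ P` starting at `ℓ z`, obtained by
integrating a positive monotone function below `f ∘ P - ℓ z`. In the second case `ℓ` extends
to `z` by `ℓ z = sup ℓ '' Iio z`. Either way `ℓ` was not maximal.
-/

open Set

theorem exists_continuous_strictMonoOn_le {α β a : ℝ} {m : ℝ → ℝ} (hαβ : α < β)
    (hm : MonotoneOn m (Ioc α β)) (ham : ∀ t ∈ Ioc α β, a < m t) :
    ∃ φ : ℝ → ℝ, Continuous φ ∧ StrictMonoOn φ (Icc α β) ∧ φ α = a ∧
      ∀ t ∈ Ioc α β, φ t ≤ m t := by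
  -- the factor `1 / (β - α)` gives `∫ s in α..t, g s ≤ (t - α) * g t ≤ m t - a` on `Ioc α β`
  set g : ℝ → ℝ := fun s => if s ≤ α then 0 else (m (min s β) - a) / (β - α)
  have hg_of_lt : ∀ s, α < s → g s = (m (min s β) - a) / (β - α) := fun s hs => if_neg hs.not_ge
  have hmin : ∀ s, α < s → min s β ∈ Ioc α β := fun s hs => ⟨lt_min hs hαβ, min_le_right _ _⟩
  have hgpos : ∀ s, α < s → 0 < g s := fun s hs => by
    rw [hg_of_lt s hs]; exact div_pos (sub_pos.2 (ham _ (hmin s hs))) (sub_pos.2 hαβ)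
  have hg : Monotone g := by
    intro s t hst
    by_cases hs : s ≤ α
    · rw [show g s = 0 from if_pos hs]
      rcases le_or_gt t α with ht | ht
      · exact (if_pos ht).ge
      · exact (hgpos t ht).le
    · have hs : α < s := not_le.1 hs
      rw [hg_of_lt s hs, hg_of_lt t (hs.trans_le hst)]
      gcongr
      exact hm (hmin s hs) (hmin t (hs.trans_le hst)) (min_le_min_right β hst)
  have hint : ∀ s t, IntervalIntegrable g MeasureTheory.volume s t :=
    fun _ _ => hg.intervalIntegrable
  refine ⟨fun t => a + ∫ s in α..t, g s,
    continuous_const.add (intervalIntegral.continuous_primitive hint α), ?_, by simp, ?_⟩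
  · intro s hs t ht hst
    have hpos := intervalIntegral.intervalIntegral_pos_of_pos_on (hint s t)
      (fun u hu => hgpos u (hs.1.trans_lt hu.1)) hst
    have hsplit := intervalIntegral.integral_interval_sub_left (hint α t) (hint α s)
    dsimp only
    linarith
  · intro t ht
    have hle : ∫ s in α..t, g s ≤ ∫ s in α..t, g t :=
      intervalIntegral.integral_mono_on ht.1.le (hint α t) intervalIntegrable_const
        fun s hs => hg hs.2
    rw [intervalIntegral.integral_const, smul_eq_mul, hg_of_lt t ht.1, min_eq_left ht.2] at hle
    have hfrac : (t - α) / (β - α) ≤ 1 := (div_le_one (sub_pos.2 hαβ)).2 (by linarith [ht.2])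
    have hgap : 0 < m t - a := sub_pos.2 (ham t ht)
    calc a + ∫ s in α..t, g s ≤ a + (t - α) * ((m t - a) / (β - α)) := by linarith
      _ = a + (t - α) / (β - α) * (m t - a) := by ring
      _ ≤ a + 1 * (m t - a) := by gcongr
      _ = m t := by ring

section

variable {X : Type*} [PartialOrder X]

def IsContinuousGradingOn (l : X → ℝ) (S : Set X) : Prop :=
  StrictMonoOn l S ∧ ∀ a ∈ S, ∀ b ∈ S, a ≤ b → SurjOn l (Icc a b) (Icc (l a) (l b))

namespace IsContinuousGradingOn

variable {l l' : X → ℝ} {S D : Set X} {x z : X}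

theorem singleton (l : X → ℝ) (x : X) : IsContinuousGradingOn l {x} := by
  refine ⟨fun a ha b hb hab => absurd (ha.trans hb.symm) hab.ne, ?_⟩
  rintro _ rfl _ rfl - c hc
  exact ⟨_, left_mem_Icc.2 le_rfl, le_antisymm hc.1 hc.2⟩

theorem congr (h : IsContinuousGradingOn l S) (hS : S.OrdConnected) (hl : EqOn l l' S) :
    IsContinuousGradingOn l' S := by
  refine ⟨fun a ha b hb hab => hl ha ▸ hl hb ▸ h.1 ha hb hab, fun a ha b hb hab c hc => ?_⟩
  rw [← hl ha, ← hl hb] at hc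
  obtain ⟨u, hu, rfl⟩ := h.2 a ha b hb hab hc
  exact ⟨u, hu, (hl (hS.out ha hb hu)).symm⟩

theorem sUnion {𝒮 : Set (Set X)} (h𝒮 : DirectedOn (· ⊆ ·) 𝒮)
    (h : ∀ S ∈ 𝒮, IsContinuousGradingOn l S) : IsContinuousGradingOn l (⋃₀ 𝒮) := by
  have common : ∀ a ∈ ⋃₀ 𝒮, ∀ b ∈ ⋃₀ 𝒮, ∃ S ∈ 𝒮, a ∈ S ∧ b ∈ S := by
    rintro a ⟨A, hA, ha⟩ b ⟨B, hB, hb⟩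
    obtain ⟨S, hS, hAS, hBS⟩ := h𝒮 A hA B hB
    exact ⟨S, hS, hAS ha, hBS hb⟩
  refine ⟨fun a ha b hb hab => ?_, fun a ha b hb hab => ?_⟩
  · obtain ⟨S, hS, haS, hbS⟩ := common a ha b hb
    exact (h S hS).1 haS hbS hab
  · obtain ⟨S, hS, haS, hbS⟩ := common a ha b hb
    exact (h S hS).2 a haS b hbS hab

theorem union_Icc (hD : IsContinuousGradingOn l D) (hDl : IsLowerSet D)
    (hI : IsContinuousGradingOn l (Icc z x)) (hz : z ∈ D) (hub : ∀ v ∈ D, v ≤ x → v ≤ z) :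
    IsContinuousGradingOn l (D ∪ Icc z x) := by
  constructor
  · rintro a (ha | ha) b (hb | hb) hab
    · exact hD.1 ha hb hab
    · have hzI : z ∈ Icc z x := left_mem_Icc.2 (hb.1.trans hb.2)
      rcases (hub a ha (hab.le.trans hb.2)).eq_or_lt with rfl | haz
      · exact hI.1 hzI hb hab
      · exact (hD.1 ha hz haz).trans_le (hI.1.monotoneOn hzI hb hb.1)
    · exact hD.1 (hDl hab.le hb) hb hab
    · exact hI.1 ha hb hab
  · rintro a (ha | ha) b (hb | hb) hab c hc
    · exact hD.2 a ha b hb hab hc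
    · have haz := hub a ha (hab.trans hb.2)
      rcases le_total c (l z) with hcz | hzc
      · obtain ⟨u, hu, rfl⟩ := hD.2 a ha z hz haz ⟨hc.1, hcz⟩
        exact ⟨u, ⟨hu.1, hu.2.trans hb.1⟩, rfl⟩
      · obtain ⟨u, hu, rfl⟩ :=
          hI.2 z (left_mem_Icc.2 (hb.1.trans hb.2)) b hb hb.1 ⟨hzc, hc.2⟩
        exact ⟨u, ⟨haz.trans hu.1, hu.2⟩, rfl⟩
    · exact hD.2 a (hDl hab hb) b hb hab hc
    · exact hI.2 a ha b hb hab hc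

theorem insert_of_isLUB [DenselyOrdered X] (hdl : DownLinear X) (hD : IsContinuousGradingOn l D)
    (hDl : IsLowerSet D) (hzD : Iio z ⊆ D) (hz : IsLUB (l '' Iio z) (l z)) :
    IsContinuousGradingOn l (insert z D) := by
  have lt_z : ∀ a < z, l a < l z := fun a ha => by
    obtain ⟨w, haw, hwz⟩ := exists_between ha
    exact (hD.1 (hzD ha) (hzD hwz) haw).trans_le (hz.1 ⟨w, hwz, rfl⟩)
  constructor
  · rintro a (rfl | ha) b (rfl | hb) hab
    · exact absurd hab (lt_irrefl _)
    · exact hD.1 (hDl hab.le hb) hb hab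
    · exact lt_z a hab
    · exact hD.1 ha hb hab
  · rintro a (rfl | ha) b (rfl | hb) hab c hc
    · exact (singleton l _).2 _ rfl _ rfl le_rfl hc
    · exact hD.2 a (hDl hab hb) b hb hab hc
    · rcases hc.2.eq_or_lt with rfl | hcz
      · exact ⟨b, right_mem_Icc.2 hab, rfl⟩
      obtain ⟨-, ⟨v, hvz, rfl⟩, hcv, -⟩ := hz.exists_between hcz
      have hav : a ≤ v := (hdl b a v hab hvz.le).resolve_right fun hva =>
        (hcv.trans_le' hc.1).not_ge (hD.1.monotoneOn (hzD hvz) ha hva)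
      obtain ⟨u, hu, rfl⟩ := hD.2 a ha v (hzD hvz) hav ⟨hc.1, hcv.le⟩
      exact ⟨u, ⟨hu.1, hu.2.trans hvz.le⟩, rfl⟩
    · exact hD.2 a ha b hb hab hc

theorem isContinuousGrading (hdl : DownLinear X) (h : IsContinuousGradingOn l univ) :
    IsContinuousGrading l := by
  have hmono : StrictMono l := fun a b hab => h.1 trivial trivial hab
  refine ⟨hmono, fun a b hab => ⟨fun u hu => ⟨hmono.monotone hu.1, hmono.monotone hu.2⟩,
    fun u hu v hv huv => ?_, h.2 a trivial b trivial hab.le⟩⟩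
  rcases hdl b u v hu.2 hv.2 with huv' | hvu
  · exact huv'.eq_or_lt.resolve_right fun h' => (hmono h').ne huv
  · exact (hvu.eq_or_lt.resolve_right fun h' => (hmono h').ne huv.symm).symm

end IsContinuousGradingOn

theorem isContinuousGradingOn_comp_invFunOn {α β : ℝ} {a b : X} {P : ℝ → X}
    (hP : StrictMonoOn P (Icc α β)) (hPb : BijOn P (Icc α β) (Icc a b)) {φ : ℝ → ℝ}
    (hφc : ContinuousOn φ (Icc α β)) (hφ : StrictMonoOn φ (Icc α β)) :
    IsContinuousGradingOn (φ ∘ Function.invFunOn P (Icc α β)) (Icc a b) := by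
  set τ := Function.invFunOn P (Icc α β)
  have hinv : InvOn τ P (Icc α β) (Icc a b) := hPb.invOn_invFunOn
  have hτ : MapsTo τ (Icc a b) (Icc α β) := (hPb.symm hinv.symm).mapsTo
  have hτmono : StrictMonoOn τ (Icc a b) := fun u hu v hv huv =>
    lt_of_not_ge fun h => huv.not_ge (hinv.2 hu ▸ hinv.2 hv ▸ hP.monotoneOn (hτ hv) (hτ hu) h)
  refine ⟨hφ.comp hτmono hτ, fun u hu v hv huv c hc => ?_⟩
  obtain ⟨t, ht, rfl⟩ := intermediate_value_Icc (hτmono.monotoneOn hu hv huv)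
    (hφc.mono (Icc_subset_Icc (hτ hu).1 (hτ hv).2)) hc
  have htαβ : t ∈ Icc α β := ⟨(hτ hu).1.trans ht.1, ht.2.trans (hτ hv).2⟩
  refine ⟨P t, ⟨?_, ?_⟩, by simp only [Function.comp, hinv.1 htαβ]⟩
  · exact hinv.2 hu ▸ hP.monotoneOn (hτ hu) htαβ ht.1
  · exact hinv.2 hv ▸ hP.monotoneOn htαβ (hτ hv) ht.2

theorem DownLinear.isChain_Iic (h : DownLinear X) (x : X) : IsChain (· ≤ ·) (Iic x) :=
  fun a ha b hb _ => h x a b ha hb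

theorem IsBRTO.exists_strictMonoOn_bijOn_Icc (hX : IsBRTO X) {a b : X} (hab : a < b) :
    ∃ α β : ℝ, ∃ P : ℝ → X, α < β ∧ P α = a ∧ P β = b ∧ StrictMonoOn P (Icc α β) ∧
      BijOn P (Icc α β) (Icc a b) := by
  obtain ⟨B, hB, hbB⟩ := (hX.2.1.isChain_Iic b).exists_maxChain
  obtain ⟨I, hI, ⟨e⟩⟩ := hX.2.2.1 B hB
  classical
  let P : ℝ → X := fun s => if h : s ∈ I then (e.symm ⟨s, h⟩ : X) else a
  have hPe : ∀ u (hu : u ∈ B), P (e ⟨u, hu⟩) = u := fun u hu => by simp [P]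
  have hP : StrictMonoOn P I := fun s hs t ht hst => by
    simp only [P, dif_pos hs, dif_pos ht]
    exact e.symm.strictMono (Subtype.mk_lt_mk.2 hst)
  have haB : a ∈ B := hbB hab.le
  have hbB' : b ∈ B := hbB le_rfl
  set α : ℝ := (e ⟨a, haB⟩ : ℝ)
  set β : ℝ := (e ⟨b, hbB'⟩ : ℝ)
  have hIcc : Icc α β ⊆ I := hI.out (e _).2 (e _).2
  have hPα : P α = a := hPe a haB
  have hPβ : P β = b := hPe b hbB'
  have hαβ : α < β := e.strictMono (Subtype.mk_lt_mk.2 hab)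
  have hPIcc := hP.mono hIcc
  refine ⟨α, β, P, hαβ, hPα, hPβ, hPIcc, ⟨fun s hs => ?_, hPIcc.injOn, fun u hu => ?_⟩⟩
  · rw [← hPα, ← hPβ]
    exact ⟨hPIcc.monotoneOn (left_mem_Icc.2 hαβ.le) hs hs.1,
      hPIcc.monotoneOn hs (right_mem_Icc.2 hαβ.le) hs.2⟩
  · have huB : u ∈ B := hbB hu.2
    exact ⟨e ⟨u, huB⟩, ⟨e.monotone (Subtype.mk_le_mk.2 hu.1), e.monotone (Subtype.mk_le_mk.2 hu.2)⟩,
      hPe u huB⟩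

theorem IsBRTO.denselyOrdered (hX : IsBRTO X) : DenselyOrdered X := by
  refine ⟨fun a b hab => ?_⟩
  obtain ⟨α, β, P, hαβ, rfl, rfl, hP, -⟩ := hX.exists_strictMonoOn_bijOn_Icc hab
  have hmid : (α + β) / 2 ∈ Icc α β := ⟨by linarith, by linarith⟩
  exact ⟨P ((α + β) / 2), hP (left_mem_Icc.2 hαβ.le) hmid (by linarith),
    hP hmid (right_mem_Icc.2 hαβ.le) (by linarith)⟩

theorem IsBRTO.exists_cut (hX : IsBRTO X) {D : Set X} (hD : IsLowerSet D) (hne : D.Nonempty)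
    {x : X} (hx : x ∉ D) :
    ∃ z ≤ x, (∀ v ≤ x, v ∈ D ↔ v ≤ z) ∨ (∀ v ≤ x, v ∈ D ↔ v < z) := by
  obtain ⟨r, hr⟩ := hX.1
  have hrD : r ∈ D := hD (hr _) hne.some_mem
  have hrx : r < x := (hr x).lt_of_ne (by rintro rfl; exact hx hrD)
  obtain ⟨α, β, P, hαβ, hPα, -, hP, hPb⟩ := hX.exists_strictMonoOn_bijOn_Icc hrx
  set T := {t ∈ Icc α β | P t ∈ D}
  have hαT : α ∈ T := ⟨left_mem_Icc.2 hαβ.le, hPα ▸ hrD⟩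
  have hTbdd : BddAbove T := ⟨β, fun t ht => ht.1.2⟩
  set t₀ := sSup T
  have ht₀ : t₀ ∈ Icc α β := ⟨le_csSup hTbdd hαT, csSup_le ⟨α, hαT⟩ fun t ht => ht.1.2⟩
  have hsurj : ∀ v ≤ x, ∃ s ∈ Icc α β, P s = v := fun v hv => hPb.surjOn ⟨hr v, hv⟩
  have le_of_mem : ∀ v ≤ x, v ∈ D → v ≤ P t₀ := by
    intro v hv hvD
    obtain ⟨s, hs, rfl⟩ := hsurj v hv
    exact hP.monotoneOn hs ht₀ (le_csSup hTbdd ⟨hs, hvD⟩)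
  refine ⟨P t₀, (hPb.mapsTo ht₀).2, ?_⟩
  by_cases hz : P t₀ ∈ D
  · exact Or.inl fun v hv => ⟨le_of_mem v hv, fun hvz => hD hvz hz⟩
  refine Or.inr fun v hv => ⟨fun hvD => (le_of_mem v hv hvD).lt_of_ne (by rintro rfl; exact hz hvD),
    fun hvz => ?_⟩
  obtain ⟨s, hs, rfl⟩ := hsurj v hv
  have hst : s < t₀ := lt_of_not_ge fun h => hvz.not_ge (hP.monotoneOn ht₀ hs h)
  obtain ⟨t, ht, hst'⟩ := exists_lt_of_lt_csSup ⟨α, hαT⟩ hst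
  exact hD (hP.monotoneOn hs ht.1 hst'.le) ht.2

theorem IsBRTO.exists_isContinuousGradingOn_Icc_le (hX : IsBRTO X) {f : X → ℝ} {z x : X}
    (hzx : z < x) (hf : StrictMonoOn f (Icc z x)) {a : ℝ} (ha : a ≤ f z) :
    ∃ h : X → ℝ, IsContinuousGradingOn h (Icc z x) ∧ h z = a ∧ ∀ u ∈ Icc z x, h u ≤ f u := by
  obtain ⟨α, β, P, hαβ, hPα, -, hP, hPb⟩ := hX.exists_strictMonoOn_bijOn_Icc hzx
  have hα : α ∈ Icc α β := left_mem_Icc.2 hαβ.le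
  have hz : z ∈ Icc z x := left_mem_Icc.2 hzx.le
  obtain ⟨φ, hφc, hφ, hφα, hφm⟩ := exists_continuous_strictMonoOn_le hαβ (m := f ∘ P)
    (fun s hs t ht hst => hf.monotoneOn (hPb.mapsTo (Ioc_subset_Icc_self hs))
      (hPb.mapsTo (Ioc_subset_Icc_self ht)) (hP.monotoneOn (Ioc_subset_Icc_self hs)
        (Ioc_subset_Icc_self ht) hst))
    (fun t ht => ha.trans_lt (hf hz (hPb.mapsTo (Ioc_subset_Icc_self ht))
      (hPα ▸ hP hα (Ioc_subset_Icc_self ht) ht.1)))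
  have hinv : LeftInvOn (Function.invFunOn P (Icc α β)) P (Icc α β) := hPb.invOn_invFunOn.1
  refine ⟨φ ∘ Function.invFunOn P (Icc α β),
    isContinuousGradingOn_comp_invFunOn hP hPb hφc.continuousOn hφ, ?_, fun u hu => ?_⟩
  · rw [Function.comp_apply, ← hPα, hinv hα, hφα]
  · obtain ⟨t, ht, rfl⟩ := hPb.surjOn hu
    rw [Function.comp_apply, hinv ht]
    rcases ht.1.eq_or_lt with rfl | hαt
    · rw [hφα, hPα]; exact ha
    · exact hφm t ⟨hαt, ht.2⟩

structure PartialGrading (f : X → ℝ) where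
  dom : Set X
  toFun : X → ℝ
  dom_nonempty : dom.Nonempty
  isLowerSet_dom : IsLowerSet dom
  isContinuousGradingOn : IsContinuousGradingOn toFun dom
  toFun_le : ∀ x ∈ dom, toFun x ≤ f x

namespace PartialGrading

variable {f : X → ℝ}

instance : Preorder (PartialGrading f) where
  le p q := p.dom ⊆ q.dom ∧ EqOn p.toFun q.toFun p.dom
  le_refl p := ⟨subset_rfl, eqOn_refl _ _⟩
  le_trans _ _ _ hpq hqs := ⟨hpq.1.trans hqs.1, hpq.2.trans (hqs.2.mono hpq.1)⟩

def ofBot {r : X} (hr : ∀ x, r ≤ x) : PartialGrading f where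
  dom := {r}
  toFun := f
  dom_nonempty := singleton_nonempty r
  isLowerSet_dom := fun _ b hba ha => le_antisymm (ha ▸ hba) (hr b)
  isContinuousGradingOn := .singleton f r
  toFun_le := fun _ _ => le_rfl

theorem bddAbove_of_isChain {c : Set (PartialGrading f)} (hc : IsChain (· ≤ ·) c)
    (hne : c.Nonempty) : BddAbove c := by
  classical
  let l : X → ℝ := fun u => if h : ∃ p ∈ c, u ∈ p.dom then h.choose.toFun u else 0
  have hl : ∀ p ∈ c, EqOn l p.toFun p.dom := by
    intro p hp u hu
    have h : ∃ p ∈ c, u ∈ p.dom := ⟨p, hp, hu⟩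
    simp only [l, dif_pos h]
    rcases hc.total h.choose_spec.1 hp with hle | hle
    · exact hle.2 h.choose_spec.2
    · exact (hle.2 hu).symm
  have hdir : DirectedOn (· ⊆ ·) (dom '' c) := by
    rintro _ ⟨p, hp, rfl⟩ _ ⟨q, hq, rfl⟩
    obtain ⟨s, hs, hps, hqs⟩ := hc.directedOn p hp q hq
    exact ⟨s.dom, mem_image_of_mem _ hs, hps.1, hqs.1⟩
  let ub : PartialGrading f :=
    { dom := ⋃₀ (dom '' c)
      toFun := l
      dom_nonempty := by
        obtain ⟨p, hp⟩ := hne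
        exact p.dom_nonempty.mono (subset_sUnion_of_mem (mem_image_of_mem _ hp))
      isLowerSet_dom := isLowerSet_sUnion (by rintro _ ⟨p, -, rfl⟩; exact p.isLowerSet_dom)
      isContinuousGradingOn := .sUnion hdir (by
        rintro _ ⟨p, hp, rfl⟩
        exact p.isContinuousGradingOn.congr p.isLowerSet_dom.ordConnected (hl p hp).symm)
      toFun_le := by
        rintro u ⟨_, ⟨p, hp, rfl⟩, hu⟩
        rw [hl p hp hu]
        exact p.toFun_le u hu }
  exact ⟨ub, fun p hp => ⟨subset_sUnion_of_mem (mem_image_of_mem _ hp), (hl p hp).symm⟩⟩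

theorem exists_isMax (hX : IsRooted X) : ∃ p : PartialGrading f, IsMax p := by
  obtain ⟨r, hr⟩ := hX
  have : Nonempty (PartialGrading f) := ⟨ofBot hr⟩
  exact zorn_le_nonempty fun _ hc hne => bddAbove_of_isChain hc hne

theorem exists_le_mem_of_cut_Iic (hX : IsBRTO X) (p : PartialGrading f) {z x : X} (hzx : z < x)
    (hf : StrictMonoOn f (Icc z x)) (hcut : ∀ v ≤ x, v ∈ p.dom ↔ v ≤ z) :
    ∃ q : PartialGrading f, p ≤ q ∧ x ∈ q.dom := by
  classical
  have hz : z ∈ p.dom := (hcut z hzx.le).2 le_rfl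
  obtain ⟨h, hh, hhz, hhf⟩ :=
    hX.exists_isContinuousGradingOn_Icc_le hzx hf (p.toFun_le z hz)
  let l : X → ℝ := fun u => if u ∈ p.dom then p.toFun u else h u
  have hlp : EqOn l p.toFun p.dom := fun u hu => if_pos hu
  have hlh : EqOn l h (Icc z x) := by
    intro u hu
    by_cases hup : u ∈ p.dom
    · obtain rfl : u = z := le_antisymm ((hcut u hu.2).1 hup) hu.1
      rw [hlp hup, hhz]
    · exact if_neg hup
  refine ⟨{ dom := p.dom ∪ Icc z x
            toFun := l
            dom_nonempty := p.dom_nonempty.mono subset_union_left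
            isLowerSet_dom := ?_
            isContinuousGradingOn := ?_
            toFun_le := ?_ },
    ⟨subset_union_left, hlp.symm⟩, Or.inr (right_mem_Icc.2 hzx.le)⟩
  · rintro u v hvu (hu | hu)
    · exact Or.inl (p.isLowerSet_dom hvu hu)
    by_cases hv : v ∈ p.dom
    · exact Or.inl hv
    have hvx : v ≤ x := hvu.trans hu.2
    refine Or.inr ⟨(hX.2.1 x v z hvx hzx.le).resolve_left fun hvz => hv ?_, hvx⟩
    exact (hcut v hvx).2 hvz
  · exact (p.isContinuousGradingOn.congr p.isLowerSet_dom.ordConnected hlp.symm).union_Icc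
      p.isLowerSet_dom (hh.congr ordConnected_Icc hlh.symm) hz fun v hv hvx => (hcut v hvx).1 hv
  · rintro u (hu | hu)
    · rw [hlp hu]; exact p.toFun_le u hu
    · rw [hlh hu]; exact hhf u hu

theorem exists_le_mem_of_cut_Iio (hX : IsBRTO X) (hf : Monotone f) (p : PartialGrading f)
    {z x : X} (hzx : z ≤ x) (hcut : ∀ v ≤ x, v ∈ p.dom ↔ v < z) :
    ∃ q : PartialGrading f, p ≤ q ∧ z ∈ q.dom := by
  classical
  have := hX.denselyOrdered
  obtain ⟨r, hr⟩ := hX.1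
  have hzD : z ∉ p.dom := fun h => lt_irrefl z ((hcut z hzx).1 h)
  have hIio : Iio z ⊆ p.dom := fun v hv => (hcut v (hv.le.trans hzx)).2 hv
  have hrz : r < z := (hcut r (hr x)).1 (p.isLowerSet_dom (hr _) p.dom_nonempty.some_mem)
  have hne : (p.toFun '' Iio z).Nonempty := ⟨_, r, hrz, rfl⟩
  have hbdd : f z ∈ upperBounds (p.toFun '' Iio z) := by
    rintro _ ⟨v, hv, rfl⟩
    exact (p.toFun_le v (hIio hv)).trans (hf hv.le)
  let l := Function.update p.toFun z (sSup (p.toFun '' Iio z))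
  have hlp : EqOn l p.toFun p.dom := fun u hu =>
    Function.update_of_ne (ne_of_mem_of_not_mem hu hzD) _ _
  have hlz₀ : l z = sSup (p.toFun '' Iio z) := Function.update_self _ _ _
  have hlz : IsLUB (l '' Iio z) (l z) := by
    rw [image_congr fun v hv => hlp (hIio hv), hlz₀]
    exact isLUB_csSup hne ⟨_, hbdd⟩
  refine ⟨{ dom := insert z p.dom
            toFun := l
            dom_nonempty := insert_nonempty _ _
            isLowerSet_dom := ?_
            isContinuousGradingOn :=
              (p.isContinuousGradingOn.congr p.isLowerSet_dom.ordConnected hlp.symm).insert_of_isLUB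
                hX.2.1 p.isLowerSet_dom hIio hlz
            toFun_le := ?_ },
    ⟨subset_insert _ _, hlp.symm⟩, mem_insert _ _⟩
  · rintro u v hvu (rfl | hu)
    · rcases hvu.eq_or_lt with rfl | hvz
      exacts [mem_insert _ _, Or.inr (hIio hvz)]
    · exact Or.inr (p.isLowerSet_dom hvu hu)
  · rintro u (rfl | hu)
    · rw [hlz₀]; exact csSup_le hne hbdd
    · rw [hlp hu]; exact p.toFun_le u hu

theorem not_isMax (hX : IsBRTO X) (hf : StrictMono f) (p : PartialGrading f) {x : X}
    (hx : x ∉ p.dom) : ¬ IsMax p := by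
  intro hp
  obtain ⟨z, hzx, hcut | hcut⟩ := hX.exists_cut p.isLowerSet_dom p.dom_nonempty hx
  · have hzx' : z < x := hzx.lt_of_ne (by rintro rfl; exact hx ((hcut z le_rfl).2 le_rfl))
    obtain ⟨q, hpq, hxq⟩ := exists_le_mem_of_cut_Iic hX p hzx' (hf.strictMonoOn _) hcut
    exact hx ((hp hpq).1 hxq)
  · obtain ⟨q, hpq, hzq⟩ := exists_le_mem_of_cut_Iio hX hf.monotone p hzx hcut
    exact lt_irrefl z ((hcut z hzx).1 ((hp hpq).1 hzq))

end PartialGrading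

end

/-- A branchwise-real tree order admits a continuous grading iff it admits a
strictly monotonic map into ℝ. -/
theorem brto_continuously_gradable_iff_real_gradable (X : Type*)
    [PartialOrder X] (hX : IsBRTO X) :
    (∃ ℓ : X → ℝ, IsContinuousGrading ℓ) ↔ ∃ f : X → ℝ, StrictMono f := by
  refine ⟨fun ⟨ℓ, hℓ⟩ => ⟨ℓ, hℓ.1⟩, fun ⟨f, hf⟩ => ?_⟩
  obtain ⟨p, hp⟩ := PartialGrading.exists_isMax (f := f) hX.1
  have hdom : p.dom = univ :=
    eq_univ_of_forall fun x => by_contra fun hx => p.not_isMax hX hf hx hp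
  exact ⟨p.toFun, (hdom ▸ p.isContinuousGradingOn).isContinuousGrading hX.2.1⟩
end

section
/- The poset of finite strictly monotonic partial functions from T to ℚ, ordered by reverse inclusion, is ccc whenever T is a well-stratified tree with no uncountable branches. -/
/-- The specialising forcing for a tree `T`: finite strictly monotonic
partial functions `T ⇀ ℚ`, coded as functions `T → Option ℚ` with finite
support. -/
def SpecPoset (T : Type*) [PartialOrder T] : Type _ :=
  {p : T → Option ℚ // {x | p x ≠ none}.Finite ∧
    ∀ x y qx qy, p x = some qx → p y = some qy → x < y → qx < qy}

/-- The specialising forcing is ordered by reverse extension. -/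
instance (T : Type*) [PartialOrder T] : PartialOrder (SpecPoset T) where
  le p q := ∀ x r, q.1 x = some r → p.1 x = some r
  le_refl p := fun _ _ h => h
  le_trans p q r hpq hqr := fun x s h => hpq x s (hqr x s h)
  le_antisymm p q hpq hqp := by
    apply Subtype.ext; funext x
    cases hp : p.1 x with
    | none =>
      cases hq : q.1 x with
      | none => rfl
      | some s => exact absurd (hpq x s hq) (by simp [hp])
    | some s => exact (hqp x s hp).symm

open Set Function

theorem exists_not_countable_fiber {ι κ : Type*} [Countable κ] (f : ι → κ) {S : Set ι}
    (hS : ¬S.Countable) : ∃ k, ¬{i ∈ S | f i = k}.Countable := by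
  by_contra! h
  refine hS ((countable_iUnion h).mono fun i hi => ?_)
  exact mem_iUnion.2 ⟨f i, hi, rfl⟩

theorem exists_not_countable_pairwiseDisjoint {ι α : Type*} (F : ι → Finset α) {S : Set ι}
    (hS : ¬S.Countable) (hF : ∀ x, {i ∈ S | x ∈ F i}.Countable) :
    ∃ S' ⊆ S, ¬S'.Countable ∧ S'.PairwiseDisjoint F := by
  obtain ⟨M, hM⟩ := zorn_subset {D | D ⊆ S ∧ D.PairwiseDisjoint F} fun c hc hchain =>
    ⟨⋃₀ c, ⟨sUnion_subset fun _ hd => (hc hd).1,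
      (hchain.pairwiseDisjoint_sUnion F).2 fun _ hd => (hc hd).2⟩, fun _ => subset_sUnion_of_mem⟩
  refine ⟨M, hM.prop.1, fun hMc => ?_, hM.prop.2⟩
  have hN : (M ∪ ⋃ i ∈ M, ⋃ x ∈ (F i : Set α), {j ∈ S | x ∈ F j}).Countable :=
    hMc.union (hMc.biUnion fun i _ => (F i).countable_toSet.biUnion fun x _ => hF x)
  obtain ⟨β, hβS, hβN⟩ := not_subset.1 fun h => hS (hN.mono h)
  have hins : insert β M ⊆ S ∧ (insert β M).PairwiseDisjoint F :=
    ⟨insert_subset hβS hM.prop.1, hM.prop.2.insert fun i hi _ =>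
      Finset.disjoint_left.2 fun x hxβ hxi => hβN (Or.inr (mem_biUnion hi (mem_biUnion hxi
        ⟨hβS, hxβ⟩)))⟩
  exact hβN (Or.inl (hM.mem_of_prop_insert hins))

theorem exists_not_countable_deltaSystem {ι α : Type*} [DecidableEq α] (n : ℕ)
    (F : ι → Finset α) {S : Set ι} (hS : ¬S.Countable) (hcard : ∀ i ∈ S, (F i).card = n) :
    ∃ S' ⊆ S, ¬S'.Countable ∧ ∃ R, (∀ i ∈ S', R ⊆ F i) ∧
      S'.Pairwise fun i j => F i ∩ F j = R := by
  induction n generalizing F S with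
  | zero =>
    refine ⟨S, subset_rfl, hS, ∅, fun i _ => Finset.empty_subset _, fun i hi j _ _ => ?_⟩
    simp [Finset.card_eq_zero.1 (hcard i hi)]
  | succ n ih =>
    by_cases hF : ∀ x, {i ∈ S | x ∈ F i}.Countable
    · obtain ⟨S', hS'S, hS', hdisj⟩ := exists_not_countable_pairwiseDisjoint F hS hF
      exact ⟨S', hS'S, hS', ∅, fun i _ => Finset.empty_subset _,
        fun i hi j hj hij => Finset.disjoint_iff_inter_eq_empty.1 (hdisj hi hj hij)⟩
    · obtain ⟨x, hx⟩ := not_forall.1 hF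
      obtain ⟨S', hS'S, hS', R, hRF, hR⟩ := ih (fun i => (F i).erase x) hx
        fun i hi => by rw [Finset.card_erase_of_mem hi.2, hcard i hi.1, Nat.add_sub_cancel]
      refine ⟨S', hS'S.trans (sep_subset _ _), hS', insert x R, fun i hi => ?_,
        fun i hi j hj hij => ?_⟩
      · exact Finset.insert_subset (hS'S hi).2 ((hRF i hi).trans (Finset.erase_subset _ _))
      · have hxi := (hS'S hi).2
        have hxj := (hS'S hj).2
        rw [← hR hi hj hij]
        grind

theorem countable_setOf_exists_apply_mem {ι κ α : Type*} [Countable κ] (f : ι → κ → α)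
    (hf : ∀ a b k, f a k = f b k → a = b) {P : Set α} (hP : P.Countable) :
    {a | ∃ k, f a k ∈ P}.Countable := by
  have : {a | ∃ k, f a k ∈ P} = ⋃ k, (f · k) ⁻¹' P := by ext; simp
  rw [this]
  exact countable_iUnion fun k => hP.preimage fun a b => hf a b k

section Tree

variable {T : Type*} [PartialOrder T]

theorem countable_of_pairwise_comparable_tuples {ι : Type*} {n : ℕ} (hT : DownLinear T)
    (hchain : ∀ C : Set T, IsChain (· ≤ ·) C → C.Countable) (f : ι → Fin n → T)
    (hf : ∀ α β j k, f α j = f β k → α = β)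
    (hcomp : Pairwise fun α β => ∃ j k, f α j < f β k ∨ f β k < f α j) : Countable ι := by
  by_contra hι
  have : Uncountable ι := not_countable_iff.1 hι
  have : (Filter.cocountable : Filter ι).NeBot :=
    ⟨fun h => not_countable_univ (compl_empty ▸ Filter.mem_cocountable.1 (h ▸ Filter.mem_bot))⟩
  let U := Ultrafilter.of (Filter.cocountable : Filter ι)
  have hbelow : ∀ x : T, (Iio x).Countable := fun x =>
    hchain _ fun y hy z hz _ => hT x y z hy.le hz.le
  have habove : ∀ β, ∀ᶠ α in (U : Filter ι), ∃ ji : Fin n × Fin n, f β ji.1 < f α ji.2 := by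
    intro β
    refine Ultrafilter.of_le _ (Filter.mem_cocountable.2 (((countable_setOf_exists_apply_mem f
      (fun a b k => hf a b k k) (countable_iUnion fun j => hbelow (f β j))).insert β).mono ?_))
    intro α hα
    by_cases hαβ : α = β
    · exact Or.inl hαβ
    obtain ⟨j, k, hlt | hlt⟩ := hcomp hαβ
    · exact Or.inr ⟨j, mem_iUnion.2 ⟨k, hlt⟩⟩
    · exact absurd ⟨(k, j), hlt⟩ hα
  choose ji hji using fun β => Ultrafilter.eventually_exists_iff.1 (habove β)
  obtain ⟨i, hi⟩ := exists_not_countable_fiber (fun β => (ji β).2) (S := univ)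
    (countable_univ_iff.not.2 hι)
  let w : ι → T := fun β => f β (ji β).1
  have hw : Function.Injective w := fun β₁ β₂ h => hf β₁ β₂ _ _ h
  have hC : IsChain (· ≤ ·) (w '' {β ∈ univ | (ji β).2 = i}) := by
    rintro _ ⟨β₁, ⟨-, hβ₁⟩, rfl⟩ _ ⟨β₂, ⟨-, hβ₂⟩, rfl⟩ -
    obtain ⟨α, h₁, h₂⟩ := ((hji β₁).and (hji β₂)).exists
    rw [hβ₁] at h₁
    rw [hβ₂] at h₂
    exact hT _ _ _ h₁.le h₂.le
  exact hi (((hchain _ hC).preimage hw).mono (subset_preimage_image _ _))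

theorem countable_of_pairwise_comparable {ι : Type*} (hT : DownLinear T)
    (hchain : ∀ C : Set T, IsChain (· ≤ ·) C → C.Countable) (F : ι → Finset T) (n : ℕ)
    (hcard : ∀ i, (F i).card = n) (hdisj : Pairwise (Disjoint on F))
    (hcomp : Pairwise fun i j => ∃ x ∈ F i, ∃ y ∈ F j, x < y ∨ y < x) : Countable ι := by
  let e : ι → Fin n → T := fun i k => (Finset.equivFinOfCardEq (hcard i)).symm k
  have he : ∀ i x, x ∈ F i ↔ ∃ k, e i k = x := fun i x =>
    ⟨fun hx => ⟨Finset.equivFinOfCardEq (hcard i) ⟨x, hx⟩, by simp [e]⟩,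
      fun ⟨k, hk⟩ => hk ▸ Finset.coe_mem _⟩
  refine countable_of_pairwise_comparable_tuples hT hchain e (fun i j k l hkl => ?_) ?_
  · by_contra hij
    exact Finset.disjoint_left.1 (hdisj hij) ((he i _).2 ⟨k, hkl⟩) ((he j _).2 ⟨l, rfl⟩)
  · intro i j hij
    obtain ⟨x, hx, y, hy, hxy⟩ := hcomp hij
    obtain ⟨⟨k, rfl⟩, ⟨l, rfl⟩⟩ := And.intro ((he i x).1 hx) ((he j y).1 hy)
    exact ⟨k, l, hxy⟩

end Tree

namespace SpecPoset

variable {T : Type*} [PartialOrder T]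

noncomputable def dom (p : SpecPoset T) : Finset T := p.2.1.toFinset

@[simp]
theorem mem_dom {p : SpecPoset T} {x : T} : x ∈ p.dom ↔ p.1 x ≠ none :=
  Set.Finite.mem_toFinset _

variable [DecidableEq T]

theorem lt_of_agree {p q : SpecPoset T} (hagree : ∀ x ∈ p.dom, x ∈ q.dom → p.1 x = q.1 x)
    (hsep : ∀ x ∈ p.dom \ q.dom, ∀ y ∈ q.dom \ p.dom, ¬x < y) {x y : T} {a b : ℚ}
    (hx : p.1 x = some a) (hy : q.1 y = some b) (hxy : x < y) : a < b := by
  have hxp : x ∈ p.dom := by simp [hx]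
  have hyq : y ∈ q.dom := by simp [hy]
  by_cases hxq : x ∈ q.dom
  · exact q.2.2 x y a b (hagree x hxp hxq ▸ hx) hy hxy
  by_cases hyp : y ∈ p.dom
  · exact p.2.2 x y a b hx (hagree y hyp hyq ▸ hy) hxy
  exact absurd hxy (hsep x (Finset.mem_sdiff.2 ⟨hxp, hxq⟩) y (Finset.mem_sdiff.2 ⟨hyq, hyp⟩))

theorem exists_le_le_of_agree {p q : SpecPoset T}
    (hagree : ∀ x ∈ p.dom, x ∈ q.dom → p.1 x = q.1 x)
    (hsep : ∀ x ∈ p.dom \ q.dom, ∀ y ∈ q.dom \ p.dom, ¬x < y ∧ ¬y < x) :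
    ∃ r : SpecPoset T, r ≤ p ∧ r ≤ q := by
  have hagree' : ∀ x ∈ q.dom, x ∈ p.dom → q.1 x = p.1 x := fun x hq hp => (hagree x hp hq).symm
  let r : SpecPoset T := ⟨fun t => (p.1 t).or (q.1 t), (p.2.1.union q.2.1).subset fun t ht => by
    simpa [Option.or_eq_none_iff, or_iff_not_imp_left] using ht, fun x y a b hx hy hxy => by
    rcases Option.or_eq_some_iff.1 hx with hx | ⟨-, hx⟩ <;>
      rcases Option.or_eq_some_iff.1 hy with hy | ⟨-, hy⟩
    · exact p.2.2 x y a b hx hy hxy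
    · exact lt_of_agree hagree (fun x hx y hy => (hsep x hx y hy).1) hx hy hxy
    · exact lt_of_agree hagree' (fun x hx y hy => (hsep y hy x hx).2) hx hy hxy
    · exact q.2.2 x y a b hx hy hxy⟩
  refine ⟨r, fun t s hs => by simp [r, hs], fun t s hs => ?_⟩
  show (p.1 t).or (q.1 t) = some s
  cases hp : p.1 t with
  | none => simp [hs]
  | some a => rw [Option.some_or, ← hs, ← hp, hagree t (by simp [hp]) (by simp [hs])]

theorem exists_not_countable_deltaSystem_agree {A : Set (SpecPoset T)} (hA : ¬A.Countable) :
    ∃ B ⊆ A, ¬B.Countable ∧ ∃ (R : Finset T) (n : ℕ), (∀ p ∈ B, (p.dom \ R).card = n) ∧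
      B.Pairwise fun p q => p.dom ∩ q.dom = R ∧ ∀ x ∈ R, p.1 x = q.1 x := by
  obtain ⟨m, hm⟩ := exists_not_countable_fiber (fun p => p.dom.card) hA
  obtain ⟨S, hSA, hS, R, hRdom, hR⟩ := exists_not_countable_deltaSystem m dom hm fun p hp => hp.2
  obtain ⟨k, hk⟩ := exists_not_countable_fiber (fun p (x : R) => p.1 x) hS
  refine ⟨_, fun p hp => (hSA hp.1).1, hk, R, m - R.card, fun p hp => ?_,
    fun p hp q hq hpq => ⟨hR hp.1 hq.1 hpq, fun x hx => congrFun (hp.2.trans hq.2.symm) ⟨x, hx⟩⟩⟩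
  rw [Finset.card_sdiff_of_subset (hRdom p hp.1), (hSA hp.1).2]

theorem exists_lt_or_lt_of_not_compatible {p q : SpecPoset T} {R : Finset T}
    (hR : p.dom ∩ q.dom = R) (hagree : ∀ x ∈ R, p.1 x = q.1 x)
    (hpq : ¬∃ r : SpecPoset T, r ≤ p ∧ r ≤ q) :
    ∃ x ∈ p.dom \ R, ∃ y ∈ q.dom \ R, x < y ∨ y < x := by
  subst hR
  by_contra! hsep
  refine hpq (exists_le_le_of_agree (fun x hxp hxq => hagree x (Finset.mem_inter.2 ⟨hxp, hxq⟩)) ?_)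
  simpa only [Finset.sdiff_inter_self_left, Finset.sdiff_inter_self_right] using hsep

end SpecPoset

/-- The specialising forcing of a well-stratified tree with no uncountable
branches is ccc: every pairwise incompatible set of conditions is countable. -/
theorem specialising_forcing_ccc (T : Type*) [PartialOrder T]
    (hT : IsWSTree T)
    (hcb : ∀ B : Set T, IsMaxChain (· ≤ ·) B → B.Countable) :
    ∀ A : Set (SpecPoset T),
      (A.Pairwise fun p q => ¬ ∃ r : SpecPoset T, r ≤ p ∧ r ≤ q) →
      A.Countable := by
  classical
  intro A hA
  by_contra hAc
  have hchain : ∀ C : Set T, IsChain (· ≤ ·) C → C.Countable := fun C hC =>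
    let ⟨M, hM, hCM⟩ := hC.exists_maxChain
    (hcb M hM).mono hCM
  obtain ⟨B, hBA, hB, R, n, hcard, hΔ⟩ := SpecPoset.exists_not_countable_deltaSystem_agree hAc
  refine hB (countable_coe_iff.1 (countable_of_pairwise_comparable hT.2.1 hchain
    (fun p : B => p.1.dom \ R) n (fun p => hcard p p.2) ?_ ?_))
  · rintro ⟨p, hp⟩ ⟨q, hq⟩ hpq
    rw [onFun, ← (hΔ hp hq (Subtype.coe_ne_coe.2 hpq)).1, Finset.sdiff_inter_self_left,
      Finset.sdiff_inter_self_right]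
    exact disjoint_sdiff_sdiff
  · rintro ⟨p, hp⟩ ⟨q, hq⟩ hpq
    obtain ⟨hR, hagree⟩ := hΔ hp hq (Subtype.coe_ne_coe.2 hpq)
    exact SpecPoset.exists_lt_or_lt_of_not_compatible hR hagree
      (hA (hBA hp) (hBA hq) (Subtype.coe_ne_coe.2 hpq))
end
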